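/- arXiv:2211.06245 — 9 statements merged into one kernel-verified Lean document; each statement's English description precedes it below -/
import Mathlib

section
/- Let H = (V, E) be a hypergraph and let EI(H) denote its edge intersection hypergraph. If EI(H) is the cycle C_n (as a 2-uniform hypergraph on V = {1,...,n}), then every vertex v of V has degree at least 3 in H, i.e., v is contained in at least three hyperedges of H. -/
open Finset

/-- Edge intersection hypergraph of a hypergraph with edge set `E` on vertex set `Fin n`. -/
def EIh {n : ℕ} (E : Finset (Finset (Fin n))) : Finset (Finset (Fin n)) :=
  ((E ×ˢ E).filter fun p => p.1 ≠ p.2 ∧ 2 ≤ (p.1 ∩ p.2).card).image fun p => p.1 ∩ p.2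

/-- The edge set of the cycle `C_n` on vertex set `Fin n`. -/
def cyc (n : ℕ) [NeZero n] : Finset (Finset (Fin n)) :=
  Finset.univ.image fun i : Fin n => ({i, i + 1} : Finset (Fin n))

/-- Degree of a vertex in a hypergraph. -/
def hdeg {n : ℕ} (E : Finset (Finset (Fin n))) (v : Fin n) : ℕ :=
  (E.filter fun e => v ∈ e).card

theorem exists_inter_eq_of_mem_EIh {n : ℕ} {E : Finset (Finset (Fin n))} {s : Finset (Fin n)}
    (hs : s ∈ EIh E) : ∃ a ∈ E, ∃ b ∈ E, a ≠ b ∧ a ∩ b = s := by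
  obtain ⟨⟨a, b⟩, hab, rfl⟩ := mem_image.mp hs
  rw [mem_filter, mem_product] at hab
  exact ⟨a, hab.1.1, b, hab.1.2, hab.2.1, rfl⟩

/- `a ∩ b = s ≠ t = c ∩ d` forces `{c, d} ≠ {a, b}`, so one of `c, d` is a third edge through `v`. -/
theorem three_le_hdeg_of_mem_EIh {n : ℕ} {E : Finset (Finset (Fin n))} {s t : Finset (Fin n)}
    {v : Fin n} (hs : s ∈ EIh E) (ht : t ∈ EIh E) (hst : s ≠ t) (hvs : v ∈ s) (hvt : v ∈ t) :
    3 ≤ hdeg E v := by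
  obtain ⟨a, ha, b, hb, hab, rfl⟩ := exists_inter_eq_of_mem_EIh hs
  obtain ⟨c, hc, d, hd, hcd, rfl⟩ := exists_inter_eq_of_mem_EIh ht
  obtain ⟨g, hgE, hvg, hga, hgb⟩ : ∃ g ∈ E, v ∈ g ∧ g ≠ a ∧ g ≠ b := by
    by_contra! hno
    have hc' := hno c hc (mem_inter.mp hvt).1
    have hd' := hno d hd (mem_inter.mp hvt).2
    apply hst
    by_cases hca : c = a
    · rw [← hca, hd' (hca ▸ hcd.symm)]
    · by_cases hda : d = a
      · rw [hc' hca, hda, inter_comm]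
      · exact absurd ((hc' hca).trans (hd' hda).symm) hcd
  calc 3 = ({g, a, b} : Finset (Finset (Fin n))).card := by
        rw [card_insert_of_notMem (by simp [hga, hgb]), card_pair hab]
    _ ≤ hdeg E v := card_le_card <| by
        simp only [insert_subset_iff, singleton_subset_iff, mem_filter]
        exact ⟨⟨hgE, hvg⟩, ⟨ha, (mem_inter.mp hvs).1⟩, ⟨hb, (mem_inter.mp hvs).2⟩⟩

theorem pair_mem_cyc {n : ℕ} [NeZero n] (i : Fin n) : ({i, i + 1} : Finset (Fin n)) ∈ cyc n :=
  mem_image.mpr ⟨i, mem_univ _, rfl⟩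

open Fin.CommRing in
theorem sub_one_pair_ne_pair_add_one {n : ℕ} [NeZero n] (hn : 3 ≤ n) (v : Fin n) :
    ({v - 1, v} : Finset (Fin n)) ≠ {v, v + 1} := by
  have h1 : (1 : Fin n) ≠ 0 := by simp [Fin.ext_iff, Nat.mod_eq_of_lt (by omega : 1 < n)]
  have h2 : (2 : Fin n) ≠ 0 := by simp [Fin.ext_iff, Nat.mod_eq_of_lt (by omega : 2 < n)]
  intro h
  have hmem : v + 1 ∈ ({v - 1, v} : Finset (Fin n)) := h ▸ by simp
  rcases mem_insert.mp hmem with h' | h'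
  · exact h2 (by linear_combination h')
  · exact h1 (by linear_combination (mem_singleton.mp h'))

theorem stmt_0 (n : ℕ) [NeZero n] (hn : 3 ≤ n) (E : Finset (Finset (Fin n)))
    (hEI : EIh E = cyc n) : ∀ v : Fin n, 3 ≤ hdeg E v := by
  intro v
  have hprev : ({v - 1, v} : Finset (Fin n)) ∈ EIh E := by
    have h := pair_mem_cyc (v - 1)
    rwa [sub_add_cancel, ← hEI] at h
  have hnext : ({v, v + 1} : Finset (Fin n)) ∈ EIh E := hEI ▸ pair_mem_cyc v
  exact three_le_hdeg_of_mem_EIh hprev hnext (sub_one_pair_ne_pair_add_one hn v)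
    (by simp) (by simp)
end

section
/- If H = (V, E) is a 4-uniform hypergraph with EI(H) = C_n, then n ≥ 11. -/
open Finset

/-!
Distinct edges meet in at most one vertex or in a cycle pair `{k, k + 1}`, and every cycle pair
arises so. If no edge contains the path `{a, a + 1, a + 2}`, two edges through `{a, a + 1}` and two
edges through `{a + 1, a + 2}` meet across only in `a + 1`, so they cover `6 + 6 - 1 = 11`
vertices. Hence for `n ≤ 10` each such path lies in an edge `F a`, and a second edge `G a`
through `{a + 1, a + 2}` avoids `a`. Encoding sets as bitmasks, an exhaustive search, checked by
the kernel, shows that for `4 ≤ n ≤ 10` no such `2 n` sets can pairwise meet as edges must.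
-/

def hasCompatibleChoice {α : Type*} (ok : α → α → Bool) : List (List α) → List α → Bool
  | [], _ => true
  | c :: cs, chosen => c.any fun m => chosen.all (ok m) && hasCompatibleChoice ok cs (m :: chosen)

theorem hasCompatibleChoice_of_forall₂ {α : Type*} {ok : α → α → Bool} {cs : List (List α)}
    {sel chosen : List α} (hsel : List.Forall₂ (· ∈ ·) sel cs)
    (hok : ∀ a ∈ sel ++ chosen, ∀ b ∈ sel ++ chosen, ok a b = true) :
    hasCompatibleChoice ok cs chosen = true := by
  induction hsel generalizing chosen with
  | nil => rfl
  | @cons m c sel cs hm _ ih =>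
    simp only [hasCompatibleChoice, List.any_eq_true, Bool.and_eq_true, List.all_eq_true]
    refine ⟨m, hm, fun b hb => hok m (by simp) b (by simp [hb]), ih fun a ha b hb => ?_⟩
    exact hok a (by simp at ha ⊢; tauto) b (by simp at hb ⊢; tauto)

section Bits

variable {n : ℕ}

def bits (s : Finset (Fin n)) : ℕ := ∑ i ∈ s, 2 ^ (i : ℕ)

theorem testBit_bits (s : Finset (Fin n)) (j : ℕ) :
    (bits s).testBit j ↔ ∃ i ∈ s, (i : ℕ) = j := by
  have : bits s = ∑ j ∈ s.map Fin.valEmbedding, 2 ^ j := by simp [bits]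
  rw [this, ← Nat.mem_bitIndices, ← List.mem_toFinset, Finset.toFinset_bitIndices_sum_two_pow]
  simp

theorem bits_union (s t : Finset (Fin n)) : bits (s ∪ t) = bits s ||| bits t := by
  refine Nat.eq_of_testBit_eq fun j => Bool.eq_iff_iff.mpr ?_
  simp only [Nat.testBit_lor, Bool.or_eq_true, testBit_bits, mem_union, or_and_right, exists_or]

theorem bits_inter (s t : Finset (Fin n)) : bits (s ∩ t) = bits s &&& bits t := by
  refine Nat.eq_of_testBit_eq fun j => Bool.eq_iff_iff.mpr ?_
  simp only [Nat.testBit_land, Bool.and_eq_true, testBit_bits, mem_inter]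
  constructor
  · rintro ⟨i, ⟨hs, ht⟩, rfl⟩
    exact ⟨⟨i, hs, rfl⟩, ⟨i, ht, rfl⟩⟩
  · rintro ⟨⟨i, hs, rfl⟩, ⟨i', ht, hi⟩⟩
    obtain rfl := Fin.ext hi
    exact ⟨i', ⟨hs, ht⟩, rfl⟩

theorem bits_singleton (a : Fin n) : bits {a} = 2 ^ (a : ℕ) := by
  simp [bits]

theorem bits_insert (a : Fin n) (s : Finset (Fin n)) :
    bits (insert a s) = 2 ^ (a : ℕ) ||| bits s := by
  rw [insert_eq, bits_union, bits_singleton]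

theorem bits_and_bits_sub_one {s : Finset (Fin n)} (hs : #s ≤ 1) :
    bits s &&& (bits s - 1) = 0 := by
  obtain h | h := Nat.le_one_iff_eq_zero_or_eq_one.mp hs
  · simp [card_eq_zero.mp h, bits]
  · obtain ⟨a, rfl⟩ := card_eq_one.mp h
    rw [bits_singleton, Nat.and_two_pow_sub_one_eq_mod, Nat.mod_self]

end Bits

section Candidates

variable (n : ℕ) [NeZero n]

/-- `c &&& (c - 1) = 0` says that `c` has at most one bit set. -/
def compatible (e f : ℕ) : Bool :=
  let c := e &&& f
  e == f || c &&& (c - 1) == 0 ||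
    (List.finRange n).any fun k => c == 2 ^ (k : ℕ) ||| 2 ^ ((k + 1 : Fin n) : ℕ)

def pathCandidates (a : Fin n) : List ℕ :=
  ((List.finRange n).filter fun w => w ∉ [a, a + 1, a + 1 + 1]).map fun w : Fin n =>
    2 ^ (a : ℕ) ||| 2 ^ ((a + 1 : Fin n) : ℕ) ||| 2 ^ ((a + 1 + 1 : Fin n) : ℕ) |||
      2 ^ (w : ℕ)

def pairCandidates (a : Fin n) : List ℕ :=
  (List.finRange n).flatMap fun x : Fin n => ((List.finRange n).filter fun y : Fin n =>
      x < y ∧ x ∉ [a, a + 1, a + 1 + 1] ∧ y ∉ [a, a + 1, a + 1 + 1]).map fun y : Fin n =>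
    2 ^ ((a + 1 : Fin n) : ℕ) ||| 2 ^ ((a + 1 + 1 : Fin n) : ℕ) ||| 2 ^ (x : ℕ) |||
      2 ^ (y : ℕ)

def candidates : List (List ℕ) :=
  (List.finRange n).map (pathCandidates n) ++ (List.finRange n).map (pairCandidates n)

theorem hasCompatibleChoice_candidates_eq_false (h4 : 4 ≤ n) (h10 : n ≤ 10) :
    hasCompatibleChoice (compatible n) (candidates n) [] = false := by
  -- `decide` needs a closed goal, so the local `NeZero` instance is replaced by a closed proof.
  interval_cases n <;>
    obtain rfl := Subsingleton.elim ‹NeZero _› (NeZero.of_pos (by norm_num)) <;> decide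

end Candidates

section EdgeIntersection

variable {n : ℕ} {E : Finset (Finset (Fin n))}

theorem mem_EIh {s : Finset (Fin n)} :
    s ∈ EIh E ↔ ∃ A ∈ E, ∃ B ∈ E, A ≠ B ∧ 2 ≤ #(A ∩ B) ∧ A ∩ B = s := by
  simp [EIh, and_assoc]

variable [NeZero n]

theorem mem_cyc {s : Finset (Fin n)} : s ∈ cyc n ↔ ∃ k : Fin n, {k, k + 1} = s := by
  simp [cyc]

theorem exists_inter_eq_of_EIh_eq_cyc (hEI : EIh E = cyc n) {A B : Finset (Fin n)} (hA : A ∈ E)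
    (hB : B ∈ E) (hAB : A ≠ B) (h2 : 2 ≤ #(A ∩ B)) : ∃ k : Fin n, {k, k + 1} = A ∩ B :=
  mem_cyc.mp (hEI ▸ mem_EIh.mpr ⟨A, hA, B, hB, hAB, h2, rfl⟩)

theorem card_inter_le_two_of_EIh_eq_cyc (hEI : EIh E = cyc n) {A B : Finset (Fin n)}
    (hA : A ∈ E) (hB : B ∈ E) (hAB : A ≠ B) : #(A ∩ B) ≤ 2 := by
  by_contra! h
  obtain ⟨k, hk⟩ := exists_inter_eq_of_EIh_eq_cyc hEI hA hB hAB h.le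
  exact h.not_ge (hk ▸ card_le_two)

theorem exists_inter_eq_pair_of_EIh_eq_cyc (hEI : EIh E = cyc n) (k : Fin n) :
    ∃ A ∈ E, ∃ B ∈ E, A ≠ B ∧ A ∩ B = {k, k + 1} := by
  obtain ⟨A, hA, B, hB, hAB, -, h⟩ := mem_EIh.mp (hEI ▸ mem_cyc.mpr ⟨k, rfl⟩)
  exact ⟨A, hA, B, hB, hAB, h⟩

theorem four_le_of_EIh_eq_cyc (hunif : ∀ e ∈ E, #e = 4) (hEI : EIh E = cyc n) : 4 ≤ n := by
  obtain ⟨A, hA, -⟩ := exists_inter_eq_pair_of_EIh_eq_cyc hEI 0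
  simpa [hunif A hA] using card_le_univ A

theorem compatible_bits_of_EIh_eq_cyc (hEI : EIh E = cyc n) {A B : Finset (Fin n)}
    (hA : A ∈ E) (hB : B ∈ E) : compatible n (bits A) (bits B) = true := by
  rw [compatible, ← bits_inter]
  simp only [Bool.or_eq_true, beq_iff_eq, List.any_eq_true, List.mem_finRange, true_and]
  obtain rfl | hAB := eq_or_ne A B
  · exact Or.inl (Or.inl rfl)
  obtain h1 | h2 := le_or_gt #(A ∩ B) 1
  · exact Or.inl (Or.inr (bits_and_bits_sub_one h1))
  · obtain ⟨k, hk⟩ := exists_inter_eq_of_EIh_eq_cyc hEI hA hB hAB h2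
    exact Or.inr ⟨k, by rw [← hk, bits_insert, bits_singleton]⟩

theorem Fin.add_one_ne_self (hn : 2 ≤ n) (a : Fin n) : a + 1 ≠ a :=
  add_ne_left.mpr (by simp [Fin.ext_iff, Nat.mod_eq_of_lt (by omega : 1 < n)])

theorem card_pair_add_one (hn : 2 ≤ n) (a : Fin n) : #{a, a + 1} = 2 :=
  card_pair (Fin.add_one_ne_self hn a).symm

theorem card_path (hn : 3 ≤ n) (a : Fin n) : #{a, a + 1, a + 1 + 1} = 3 := by
  have h2 : (1 : Fin n) + 1 ≠ 0 := by
    simp [Fin.ext_iff, Fin.val_add, Nat.mod_eq_of_lt (by omega : 1 < n),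
      Nat.mod_eq_of_lt (by omega : 2 < n)]
  refine card_eq_three.mpr ⟨a, a + 1, a + 1 + 1, (Fin.add_one_ne_self (by omega) a).symm, ?_,
    (Fin.add_one_ne_self (by omega) (a + 1)).symm, rfl⟩
  rw [add_assoc]
  exact (add_ne_left.mpr h2).symm

theorem inter_eq_singleton_of_forall_not_path_subset (hEI : EIh E = cyc n) {a : Fin n}
    (h : ∀ F ∈ E, ¬ {a, a + 1, a + 1 + 1} ⊆ F) {A B : Finset (Fin n)} (hA : A ∈ E) (hB : B ∈ E)
    (haA : {a, a + 1} ⊆ A) (haB : {a + 1, a + 1 + 1} ⊆ B) : A ∩ B = {a + 1} := by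
  have ha1 : a + 1 ∈ A ∩ B := mem_inter.mpr ⟨haA (by simp), haB (by simp)⟩
  suffices #(A ∩ B) ≤ 1 from eq_singleton_iff_unique_mem.mpr
    ⟨ha1, fun x hx => card_le_one.mp this x hx _ ha1⟩
  by_contra! h2
  have hAB : A ≠ B := by
    rintro rfl
    exact h A hA (insert_subset (haA (by simp)) haB)
  obtain ⟨k, hk⟩ := exists_inter_eq_of_EIh_eq_cyc hEI hA hB hAB h2
  rw [← hk, mem_insert, mem_singleton] at ha1
  obtain rfl | hk1 := ha1
  · have : a + 1 + 1 ∈ A := (mem_inter.mp (hk ▸ mem_insert_of_mem (mem_singleton_self _))).1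
    exact h A hA (insert_subset (haA (by simp)) (insert_subset (haA (by simp)) (by simpa)))
  · obtain rfl := add_right_cancel hk1
    have : a ∈ B := (mem_inter.mp (hk ▸ mem_insert_self _ _)).2
    exact h B hB (insert_subset this haB)

theorem eleven_le_of_forall_not_path_subset (hunif : ∀ e ∈ E, #e = 4) (hEI : EIh E = cyc n)
    (a : Fin n) (h : ∀ F ∈ E, ¬ {a, a + 1, a + 1 + 1} ⊆ F) : 11 ≤ n := by
  have hn := four_le_of_EIh_eq_cyc hunif hEI
  obtain ⟨A₁, hA₁, A₂, hA₂, -, hA⟩ := exists_inter_eq_pair_of_EIh_eq_cyc hEI a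
  obtain ⟨B₁, hB₁, B₂, hB₂, -, hB⟩ := exists_inter_eq_pair_of_EIh_eq_cyc hEI (a + 1)
  have hcardA := card_union_add_card_inter A₁ A₂
  have hcardB := card_union_add_card_inter B₁ B₂
  rw [hA, card_pair_add_one (by omega), hunif A₁ hA₁, hunif A₂ hA₂] at hcardA
  rw [hB, card_pair_add_one (by omega), hunif B₁ hB₁, hunif B₂ hB₂] at hcardB
  have hcross {A B : Finset (Fin n)} :=
    inter_eq_singleton_of_forall_not_path_subset hEI h (A := A) (B := B)
  have hAB : (A₁ ∪ A₂) ∩ (B₁ ∪ B₂) = {a + 1} := by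
    rw [union_inter_distrib_right, inter_union_distrib_left, inter_union_distrib_left,
      hcross hA₁ hB₁ (hA ▸ inter_subset_left) (hB ▸ inter_subset_left),
      hcross hA₁ hB₂ (hA ▸ inter_subset_left) (hB ▸ inter_subset_right),
      hcross hA₂ hB₁ (hA ▸ inter_subset_right) (hB ▸ inter_subset_left),
      hcross hA₂ hB₂ (hA ▸ inter_subset_right) (hB ▸ inter_subset_right), union_self, union_self]
  have hcard := card_union_add_card_inter (A₁ ∪ A₂) (B₁ ∪ B₂)
  rw [hAB, card_singleton] at hcard
  have := card_le_univ (A₁ ∪ A₂ ∪ (B₁ ∪ B₂))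
  rw [Fintype.card_fin] at this
  omega

theorem exists_pair_subset_not_mem (hEI : EIh E = cyc n) (hn : 3 ≤ n) {a : Fin n}
    {F : Finset (Fin n)} (hF : F ∈ E) (haF : {a, a + 1, a + 1 + 1} ⊆ F) :
    ∃ G ∈ E, {a + 1, a + 1 + 1} ⊆ G ∧ a ∉ G := by
  obtain ⟨B₁, hB₁, B₂, hB₂, hB, hB12⟩ := exists_inter_eq_pair_of_EIh_eq_cyc hEI (a + 1)
  have key : ∀ G ∈ E, G ≠ F → {a + 1, a + 1 + 1} ⊆ G → a ∉ G := fun G hG hGF haG ha => by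
    have := card_le_card (subset_inter (insert_subset ha haG) haF)
    have := card_inter_le_two_of_EIh_eq_cyc hEI hG hF hGF
    rw [card_path hn] at *
    omega
  by_cases h : B₁ = F
  · exact ⟨B₂, hB₂, hB12 ▸ inter_subset_right, key B₂ hB₂ (h ▸ hB.symm) (hB12 ▸ inter_subset_right)⟩
  · exact ⟨B₁, hB₁, hB12 ▸ inter_subset_left, key B₁ hB₁ h (hB12 ▸ inter_subset_left)⟩

theorem bits_mem_pathCandidates (hn : 3 ≤ n) {a : Fin n} {F : Finset (Fin n)} (hF : #F = 4)
    (haF : {a, a + 1, a + 1 + 1} ⊆ F) : bits F ∈ pathCandidates n a := by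
  obtain ⟨w, hw⟩ : ∃ w, F \ {a, a + 1, a + 1 + 1} = {w} := by
    rw [← card_eq_one, card_sdiff_of_subset haF, hF, card_path hn]
  have hwF : w ∉ ({a, a + 1, a + 1 + 1} : Finset (Fin n)) :=
    (mem_sdiff.mp (hw ▸ mem_singleton_self w)).2
  refine List.mem_map.mpr ⟨w, List.mem_filter.mpr ⟨List.mem_finRange w, by simpa using hwF⟩, ?_⟩
  rw [← union_sdiff_of_subset haF, hw, bits_union, bits_insert, bits_insert, bits_singleton,
    bits_singleton]
  simp only [Nat.lor_assoc]

theorem bits_mem_pairCandidates (hn : 3 ≤ n) {a : Fin n} {G : Finset (Fin n)} (hG : #G = 4)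
    (haG : {a + 1, a + 1 + 1} ⊆ G) (ha : a ∉ G) : bits G ∈ pairCandidates n a := by
  obtain ⟨x, y, hxy, hG'⟩ : ∃ x y, x < y ∧ G \ {a + 1, a + 1 + 1} = {x, y} := by
    obtain ⟨x, y, hxy, h⟩ := card_eq_two.mp (show #(G \ {a + 1, a + 1 + 1}) = 2 by
      rw [card_sdiff_of_subset haG, hG, card_pair_add_one (by omega)])
    obtain hlt | hgt := hxy.lt_or_gt
    exacts [⟨x, y, hlt, h⟩, ⟨y, x, hgt, pair_comm x y ▸ h⟩]
  have hmem : ∀ z ∈ ({x, y} : Finset (Fin n)), z ∉ [a, a + 1, a + 1 + 1] := fun z hz => by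
    have := mem_sdiff.mp (hG' ▸ hz)
    simp only [mem_insert, mem_singleton, not_or] at this
    simp only [List.mem_cons, List.not_mem_nil, or_false, not_or]
    exact ⟨fun h => ha (h ▸ this.1), this.2⟩
  refine List.mem_flatMap.mpr ⟨x, List.mem_finRange x, List.mem_map.mpr ⟨y, List.mem_filter.mpr
    ⟨List.mem_finRange y, decide_eq_true ⟨hxy, hmem x (by simp), hmem y (by simp)⟩⟩, ?_⟩⟩
  rw [← union_sdiff_of_subset haG, hG', bits_union, bits_insert, bits_insert, bits_singleton,
    bits_singleton]
  simp only [Nat.lor_assoc]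

theorem hasCompatibleChoice_candidates_of_EIh_eq_cyc (hunif : ∀ e ∈ E, #e = 4)
    (hEI : EIh E = cyc n) {F G : Fin n → Finset (Fin n)} (hFE : ∀ a, F a ∈ E)
    (haF : ∀ a, {a, a + 1, a + 1 + 1} ⊆ F a) (hGE : ∀ a, G a ∈ E)
    (haG : ∀ a, {a + 1, a + 1 + 1} ⊆ G a) (ha : ∀ a, a ∉ G a) :
    hasCompatibleChoice (compatible n) (candidates n) [] = true := by
  have hn := four_le_of_EIh_eq_cyc hunif hEI
  set sel := (List.finRange n).map (bits ∘ F) ++ (List.finRange n).map (bits ∘ G)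
  have hsel : ∀ e ∈ sel ++ [], ∃ A ∈ E, bits A = e := by
    simp only [sel, List.append_nil, List.mem_append, List.mem_map, List.mem_finRange, true_and,
      Function.comp_apply]
    rintro e (⟨a, rfl⟩ | ⟨a, rfl⟩)
    exacts [⟨F a, hFE a, rfl⟩, ⟨G a, hGE a, rfl⟩]
  refine hasCompatibleChoice_of_forall₂ (sel := sel) ?_ fun e he f hf => ?_
  · refine List.rel_append ?_ ?_ <;>
      simp only [List.forall₂_map_left_iff, List.forall₂_map_right_iff, List.forall₂_same,
        Function.comp_apply]
    · exact fun a _ => bits_mem_pathCandidates (by omega) (hunif _ (hFE a)) (haF a)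
    · exact fun a _ => bits_mem_pairCandidates (by omega) (hunif _ (hGE a)) (haG a) (ha a)
  · obtain ⟨A, hA, rfl⟩ := hsel e he
    obtain ⟨B, hB, rfl⟩ := hsel f hf
    exact compatible_bits_of_EIh_eq_cyc hEI hA hB

end EdgeIntersection

theorem stmt_4 (n : ℕ) [NeZero n] (E : Finset (Finset (Fin n)))
    (hunif : ∀ e ∈ E, e.card = 4) (hEI : EIh E = cyc n) : 11 ≤ n := by
  by_contra! hn
  have h4 := four_le_of_EIh_eq_cyc hunif hEI
  have hpath : ∀ a : Fin n, ∃ F ∈ E, {a, a + 1, a + 1 + 1} ⊆ F := fun a => by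
    by_contra! h
    exact hn.not_ge (eleven_le_of_forall_not_path_subset hunif hEI a h)
  choose F hFE haF using hpath
  choose G hGE haG ha using fun a => exists_pair_subset_not_mem hEI (by omega) (hFE a) (haF a)
  have := hasCompatibleChoice_candidates_of_EIh_eq_cyc hunif hEI hFE haF hGE haG ha
  rw [hasCompatibleChoice_candidates_eq_false n h4 (by omega)] at this
  exact Bool.false_ne_true this
end

section
/- For every n ≥ 11, the 4-uniform hypergraph H on V = {1,...,n} with hyperedge set E = { {i, i+1, i+2, i+5} : i ∈ {1,...,n} } (indices mod n) satisfies EI(H) = C_n and has exactly n hyperedges. -/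
open Finset

/-!
Every hyperedge is a translate `i + {0, 1, 2, 5}` in `ℤ/n`. In `{0, 1, 2, 5}` the only difference
realised twice is `1 = 1 - 0 = 2 - 1`, and since sums of two offsets stay below `n ≥ 11`, no two
differences of offsets become equal modulo `n`. Hence two distinct hyperedges share two vertices
only when they are consecutive translates, and then they share exactly `{i + 1, i + 2}`.
-/

open scoped Fin.NatCast Fin.CommRing

lemma Fin.natCast_inj_of_lt {n : ℕ} [NeZero n] {a b : ℕ} (ha : a < n) (hb : b < n) :
    (a : Fin n) = b ↔ a = b := by
  rw [Fin.ext_iff, Fin.val_cast_of_lt ha, Fin.val_cast_of_lt hb]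

lemma mem_EIh_image {n : ℕ} {ι : Type*} [Fintype ι] (f : ι → Finset (Fin n))
    (s : Finset (Fin n)) :
    s ∈ EIh (univ.image f) ↔ ∃ i j, f i ≠ f j ∧ 2 ≤ #(f i ∩ f j) ∧ f i ∩ f j = s := by
  simp only [EIh, mem_image, mem_filter, mem_product, mem_univ, true_and, Prod.exists]
  constructor
  · rintro ⟨-, -, ⟨⟨⟨i, rfl⟩, j, rfl⟩, h⟩, rfl⟩
    exact ⟨i, j, h.1, h.2, rfl⟩
  · rintro ⟨i, j, h⟩
    exact ⟨f i, f j, ⟨⟨⟨i, rfl⟩, j, rfl⟩, h.1, h.2.1⟩, h.2.2⟩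

section NatTranslate

variable {n : ℕ} [NeZero n] {D : Finset ℕ}

def natTranslate (D : Finset ℕ) (i : Fin n) : Finset (Fin n) :=
  D.image fun a : ℕ => i + (a : Fin n)

lemma mem_natTranslate {i v : Fin n} : v ∈ natTranslate D i ↔ ∃ a ∈ D, i + (a : Fin n) = v :=
  mem_image

lemma natTranslate_injective (hD : ∀ a ∈ D, ∀ b ∈ D, a + b < n) (h0 : 0 ∈ D) :
    Function.Injective (natTranslate (n := n) D) := by
  have self_mem (i : Fin n) : i ∈ natTranslate D i := mem_natTranslate.2 ⟨0, h0, by simp⟩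
  intro i j hij
  obtain ⟨a, ha, hja⟩ := mem_natTranslate.1 (hij ▸ self_mem i)
  obtain ⟨b, hb, hib⟩ := mem_natTranslate.1 (hij ▸ self_mem j)
  have hab : a + b = 0 := by
    rw [← Fin.natCast_inj_of_lt (hD a ha b hb) (by omega)]
    push_cast
    linear_combination hja + hib
  rw [← hja, Nat.eq_zero_of_add_eq_zero_right hab, Nat.cast_zero, add_zero]

/-- Two common points of the translates give `j - i = a₁ - b₁ = a₂ - b₂` in `Fin n`, which `hD`
lifts to `ℕ`. -/
lemma eq_add_one_or_of_two_le_card_inter (hD : ∀ a ∈ D, ∀ b ∈ D, a + b < n)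
    (hrep : ∀ a₁ ∈ D, ∀ b₁ ∈ D, ∀ a₂ ∈ D, ∀ b₂ ∈ D,
      a₁ + b₂ = a₂ + b₁ → a₁ ≠ a₂ → a₁ ≠ b₁ → a₁ = b₁ + 1 ∨ b₁ = a₁ + 1)
    {i j : Fin n} (hij : i ≠ j) (h : 2 ≤ #(natTranslate D i ∩ natTranslate D j)) :
    j = i + 1 ∨ i = j + 1 := by
  obtain ⟨v, hv, w, hw, hvw⟩ := one_lt_card.1 h
  simp only [mem_inter, mem_natTranslate] at hv hw
  obtain ⟨⟨a₁, ha₁, rfl⟩, b₁, hb₁, hv⟩ := hv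
  obtain ⟨⟨a₂, ha₂, rfl⟩, b₂, hb₂, hw⟩ := hw
  have hsum : a₁ + b₂ = a₂ + b₁ := by
    rw [← Fin.natCast_inj_of_lt (hD _ ha₁ _ hb₂) (hD _ ha₂ _ hb₁)]
    push_cast
    linear_combination hw - hv
  rcases hrep a₁ ha₁ b₁ hb₁ a₂ ha₂ b₂ hb₂ hsum (by rintro rfl; exact hvw rfl)
    (by rintro rfl; exact hij (add_right_cancel hv).symm) with rfl | rfl
  · left
    push_cast at hv
    linear_combination hv
  · right
    push_cast at hv
    linear_combination -hv

end NatTranslate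

section QuadOffsets

def quadOffsets : Finset ℕ := {0, 1, 2, 5}

lemma quadOffsets_add_lt {n : ℕ} (hn : 11 ≤ n) :
    ∀ a ∈ quadOffsets, ∀ b ∈ quadOffsets, a + b < n := by
  simp only [quadOffsets, mem_insert, mem_singleton]
  omega

lemma quadOffsets_repeated_difference : ∀ a₁ ∈ quadOffsets, ∀ b₁ ∈ quadOffsets,
    ∀ a₂ ∈ quadOffsets, ∀ b₂ ∈ quadOffsets,
      a₁ + b₂ = a₂ + b₁ → a₁ ≠ a₂ → a₁ ≠ b₁ → a₁ = b₁ + 1 ∨ b₁ = a₁ + 1 := by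
  decide

lemma quadOffsets_succ : ∀ a ∈ quadOffsets, ∀ b ∈ quadOffsets, a = b + 1 → a = 1 ∨ a = 2 := by
  decide

variable {n : ℕ} [NeZero n]

lemma natTranslate_quadOffsets (i : Fin n) :
    natTranslate quadOffsets i = {i, i + 1, i + 2, i + 5} := by
  simp [natTranslate, quadOffsets]

lemma natTranslate_quadOffsets_inter_succ (hn : 11 ≤ n) (i : Fin n) :
    natTranslate quadOffsets i ∩ natTranslate quadOffsets (i + 1) = {i + 1, i + 1 + 1} := by
  have hD := quadOffsets_add_lt hn
  ext v
  simp only [mem_inter, mem_natTranslate, mem_insert, mem_singleton]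
  constructor
  · rintro ⟨⟨a, ha, rfl⟩, b, hb, hv⟩
    have hab : a = b + 1 := by
      rw [← Fin.natCast_inj_of_lt (n := n) (by simpa using hD a ha 0 (by decide))
        (hD b hb 1 (by decide))]
      push_cast
      linear_combination -hv
    rcases quadOffsets_succ a ha b hb hab with rfl | rfl
    · left; simp
    · right; push_cast; ring
  · rintro (rfl | rfl)
    · exact ⟨⟨1, by decide, by simp⟩, 0, by decide, by simp⟩
    · exact ⟨⟨2, by decide, by push_cast; ring⟩, 1, by decide, by simp⟩

theorem EIh_image_natTranslate_quadOffsets (hn : 11 ≤ n) :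
    EIh (univ.image (natTranslate (n := n) quadOffsets)) = cyc n := by
  have hD := quadOffsets_add_lt hn
  have hinj := natTranslate_injective hD (by decide : 0 ∈ quadOffsets)
  have : Nontrivial (Fin n) := Fin.nontrivial_iff_two_le.2 (by omega)
  have hsucc (i : Fin n) : i ≠ i + 1 := (succ_ne_self i).symm
  ext s
  simp only [mem_EIh_image, hinj.ne_iff, cyc, mem_image, mem_univ, true_and]
  constructor
  · rintro ⟨i, j, hij, hcard, rfl⟩
    rcases eq_add_one_or_of_two_le_card_inter hD quadOffsets_repeated_difference hij hcard
      with rfl | rfl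
    · exact ⟨i + 1, (natTranslate_quadOffsets_inter_succ hn i).symm⟩
    · exact ⟨j + 1, by rw [inter_comm, natTranslate_quadOffsets_inter_succ hn]⟩
  · rintro ⟨k, rfl⟩
    obtain ⟨i, rfl⟩ : ∃ i, i + 1 = k := ⟨k - 1, sub_add_cancel k 1⟩
    refine ⟨i, i + 1, hsucc i, ?_, natTranslate_quadOffsets_inter_succ hn i⟩
    rw [natTranslate_quadOffsets_inter_succ hn, card_pair (hsucc _)]

end QuadOffsets

theorem stmt_5 (n : ℕ) [NeZero n] (hn : 11 ≤ n) :
    letI E : Finset (Finset (Fin n)) :=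
      Finset.univ.image fun i : Fin n => ({i, i + 1, i + 2, i + 5} : Finset (Fin n))
    EIh E = cyc n ∧ E.card = n := by
  have hE : (fun i : Fin n => ({i, i + 1, i + 2, i + 5} : Finset (Fin n))) =
      natTranslate quadOffsets :=
    funext fun i => (natTranslate_quadOffsets i).symm
  simp only [hE]
  refine ⟨EIh_image_natTranslate_quadOffsets hn, ?_⟩
  rw [card_image_of_injective _ (natTranslate_injective (quadOffsets_add_lt hn) (by decide)),
    card_univ, Fintype.card_fin]
end

section
/- Let n ≥ 12 with n ≡ 0 (mod 4). The 4-uniform hypergraph H on V = {1,...,n} with hyperedges E = { {i, i+1, i+2, i+3} : i ∈ {1, 3, 5, ..., n−1} } ∪ { {i, i+1, n/2 + i, n/2 + i + 1} : i ∈ {2, 4, ..., n/2} } (indices mod n) satisfies EI(H) = C_n and |E| = 3n/4; moreover, no 4-uniform hypergraph H' with EI(H') = C_n has fewer hyperedges. -/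
/-!
Every hyperedge of the construction has the form `quad n i p = {i, i+1, i+p, i+p+1}`: a path
(`p = 2`, `i` odd) or a pair of opposite cycle edges (`p = n/2`, `i` even, `2 ≤ i ≤ n/2`).
Reducing congruences modulo `n` to linear arithmetic shows that two distinct hyperedges share
at most two vertices, and these are adjacent, while every cycle edge lies in two hyperedges;
hence `EI(H) = C_n`, and there are `n/2 + n/4` hyperedges.

For the lower bound let `w(e)` count the `x` with `x, x+1 ∈ e`. Every cycle edge is the
intersection of two hyperedges, so `∑ w(e) ≥ 2n`. As `#e - w(e)` is the number of maximal runs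
of consecutive vertices of `e`, a 4-set has `w(e) ≤ 3`, with equality only for an arc
`{v, v+1, v+2, v+3}`. Arcs starting at consecutive vertices meet in three vertices, so at most
`n/2` arcs are hyperedges, and `2n ≤ 2|E'| + n/2`.
-/

open Finset

open Fin.NatCast

section

variable {n : ℕ}

theorem inter_mem_EIh {E : Finset (Finset (Fin n))} {e f : Finset (Fin n)} (he : e ∈ E)
    (hf : f ∈ E) (hef : e ≠ f) (hcard : 2 ≤ #(e ∩ f)) : e ∩ f ∈ EIh E :=
  mem_image.mpr ⟨(e, f), mem_filter.mpr ⟨mem_product.mpr ⟨he, hf⟩, hef, hcard⟩, rfl⟩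

theorem two_le_card_filter_superset_of_mem_EIh {E : Finset (Finset (Fin n))}
    {s : Finset (Fin n)} (hs : s ∈ EIh E) : 2 ≤ #(E.filter (s ⊆ ·)) := by
  obtain ⟨⟨e, f⟩, hp, rfl⟩ := mem_image.mp hs
  obtain ⟨hmem, hef, -⟩ := mem_filter.mp hp
  obtain ⟨he, hf⟩ := mem_product.mp hmem
  exact one_lt_card.mpr ⟨e, mem_filter.mpr ⟨he, inter_subset_left⟩,
    f, mem_filter.mpr ⟨hf, inter_subset_right⟩, hef⟩

variable [NeZero n]

theorem card_le_two_of_mem_cyc {s : Finset (Fin n)} (hs : s ∈ cyc n) : #s ≤ 2 := by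
  obtain ⟨i, -, rfl⟩ := mem_image.mp hs
  exact card_le_two

namespace Fin

theorem natCast_eq_natCast_iff_of_lt {a b : ℕ} (ha : a < 2 * n) (hb : b < 2 * n) :
    (a : Fin n) = b ↔ a = b ∨ a = b + n ∨ b = a + n := by
  have hred : ∀ c < 2 * n, c % n = if c < n then c else c - n := fun c hc => by
    split_ifs with h
    · exact Nat.mod_eq_of_lt h
    · rw [Nat.mod_eq_sub_mod (by omega), Nat.mod_eq_of_lt (by omega)]
  rw [Fin.ext_iff, Fin.val_natCast, Fin.val_natCast, hred a ha, hred b hb]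
  split_ifs <;> omega

theorem add_natCast_ne_self {k : ℕ} (h0 : 0 < k) (hk : k < n) (v : Fin n) : v + k ≠ v := by
  intro h
  have : (k : Fin n) = 0 := by simpa using h
  exact absurd (Nat.le_of_dvd h0 (Fin.natCast_eq_zero.mp this)) (by omega)

end Fin

def arc (v : Fin n) (m : ℕ) : Finset (Fin n) := (range m).image fun k : ℕ => v + k

theorem mem_arc {v x : Fin n} {m : ℕ} : x ∈ arc v m ↔ ∃ k < m, v + k = x := by
  simp [arc]

theorem card_arc (v : Fin n) {m : ℕ} (hm : m ≤ n) : #(arc v m) = m := by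
  rw [arc, card_image_of_injOn, card_range]
  intro k hk l hl hkl
  simp only [coe_range, Set.mem_Iio] at hk hl
  have := (Fin.natCast_eq_natCast_iff_of_lt (by omega) (by omega)).mp (add_left_cancel hkl)
  omega

def runStarts (e : Finset (Fin n)) : Finset (Fin n) := e.filter fun x => x - 1 ∉ e

def pairStarts (e : Finset (Fin n)) : Finset (Fin n) := e.filter fun x => x + 1 ∈ e

theorem card_runStarts_add_card_pairStarts (e : Finset (Fin n)) :
    #(runStarts e) + #(pairStarts e) = #e := by
  have hshift : (pairStarts e).map (addRightEmbedding 1) = e.filter fun x => x - 1 ∈ e := by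
    ext x
    simp only [pairStarts, mem_map, mem_filter, addRightEmbedding_apply]
    constructor
    · rintro ⟨y, ⟨hy, hy1⟩, rfl⟩
      simpa using ⟨hy1, hy⟩
    · rintro ⟨hx, hx1⟩
      exact ⟨x - 1, by simpa using ⟨hx1, hx⟩, by simp⟩
  rw [runStarts, ← card_map (s := pairStarts e) (addRightEmbedding 1), hshift, add_comm]
  exact card_filter_add_card_filter_not _

theorem eq_univ_of_runStarts_eq_empty {e : Finset (Fin n)} (he : e.Nonempty)
    (h : runStarts e = ∅) : e = univ := by
  obtain ⟨x, hx⟩ := he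
  have hpred : ∀ y ∈ e, y - 1 ∈ e := fun y hy => by
    by_contra hy'
    have : y ∈ runStarts e := mem_filter.mpr ⟨hy, hy'⟩
    simp [h] at this
  have hsub : ∀ k : ℕ, x - k ∈ e := fun k => by
    induction k with
    | zero => simpa using hx
    | succ k ih => simpa [sub_add_eq_sub_sub] using hpred _ ih
  refine eq_univ_of_forall fun z => ?_
  simpa using hsub (x - z).val

theorem eq_arc_of_runStarts_eq_singleton {e : Finset (Fin n)} {s : Fin n}
    (h : runStarts e = {s}) : e = arc s #e := by
  have hstart : ∀ y ∈ e, y ≠ s → y - 1 ∈ e := fun y hy hys => by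
    by_contra hy'
    exact hys (mem_singleton.mp (h ▸ mem_filter.mpr ⟨hy, hy'⟩))
  have hsub : e ⊆ arc s #e := by
    intro x hx
    have hex : ∃ i : ℕ, x - i = s := ⟨(x - s).val, by simp⟩
    set i := Nat.find hex
    have hxi : x - i = s := Nat.find_spec hex
    -- walking down from `x`, we stay in `e` until we reach the only run start `s`
    have hback : ∀ j ≤ i, x - j ∈ e := fun j => by
      induction j with
      | zero => simpa using hx
      | succ j ih =>
        intro hj
        have hne : x - j ≠ s := Nat.find_min hex (by omega)
        simpa [sub_add_eq_sub_sub] using hstart _ (ih (by omega)) hne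
    have harc : arc s (i + 1) ⊆ e := fun y hy => by
      obtain ⟨k, hk, rfl⟩ := mem_arc.mp hy
      have : s + k = x - ((i - k : ℕ) : Fin n) := by
        rw [← hxi, ← Nat.sub_add_cancel (by omega : k ≤ i), Nat.cast_add, Nat.add_sub_cancel]
        abel
      exact this ▸ hback _ (by omega)
    have hin : i < n :=
      (Nat.find_min' hex (by simp : x - (x - s).val = s)).trans_lt (x - s).isLt
    have hcard := card_le_card harc
    rw [card_arc s (by omega)] at hcard
    exact mem_arc.mpr ⟨i, by omega, by rw [← hxi]; abel⟩
  refine eq_of_subset_of_card_le hsub ?_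
  rw [card_arc s (card_le_univ e |>.trans_eq (Fintype.card_fin n))]

theorem card_pairStarts_lt {e : Finset (Fin n)} (he : e.Nonempty) (hne : e ≠ univ) :
    #(pairStarts e) < #e := by
  have hruns : (runStarts e).Nonempty :=
    nonempty_iff_ne_empty.mpr fun h => hne (eq_univ_of_runStarts_eq_empty he h)
  have := card_runStarts_add_card_pairStarts e
  have := hruns.card_pos
  omega

theorem exists_eq_arc_of_card_pairStarts {e : Finset (Fin n)} (h : #(pairStarts e) + 1 = #e) :
    ∃ s, e = arc s #e := by
  obtain ⟨s, hs⟩ := card_eq_one.mp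
    (by have := card_runStarts_add_card_pairStarts e; omega : #(runStarts e) = 1)
  exact ⟨s, eq_arc_of_runStarts_eq_singleton hs⟩

theorem card_pairStarts_le_three (hn : 4 < n) {e : Finset (Fin n)} (he : #e = 4) :
    #(pairStarts e) ≤ 3 := by
  have hne : e ≠ univ := by
    rintro rfl
    rw [card_univ, Fintype.card_fin] at he
    omega
  have := card_pairStarts_lt (card_pos.mp (by omega)) hne
  omega

theorem card_pairStarts_le_two_of_ne_arc (hn : 4 < n) {e : Finset (Fin n)} (he : #e = 4)
    (harc : ∀ v, e ≠ arc v 4) : #(pairStarts e) ≤ 2 := by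
  have := card_pairStarts_le_three hn he
  by_contra h3
  obtain ⟨s, hs⟩ := exists_eq_arc_of_card_pairStarts (e := e) (by omega)
  exact harc s (he ▸ hs)

theorem two_mul_le_sum_card_pairStarts {E : Finset (Finset (Fin n))} (hE : EIh E = cyc n) :
    2 * n ≤ ∑ e ∈ E, #(pairStarts e) := by
  have hpairs : ∀ e : Finset (Fin n),
      pairStarts e = univ.bipartiteAbove (fun e x => {x, x + 1} ⊆ e) e := fun e => by
    ext x
    simp [pairStarts, bipartiteAbove, insert_subset_iff]
  simp_rw [hpairs, sum_card_bipartiteAbove_eq_sum_card_bipartiteBelow]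
  have htwice : ∀ x ∈ (univ : Finset (Fin n)),
      2 ≤ #(E.bipartiteBelow (fun e x => {x, x + 1} ⊆ e) x) := fun x _ =>
    two_le_card_filter_superset_of_mem_EIh (hE ▸ mem_image_of_mem _ (mem_univ x))
  simpa [mul_comm] using card_nsmul_le_sum _ _ _ htwice

def blockStarts (E : Finset (Finset (Fin n))) : Finset (Fin n) :=
  univ.filter fun v => arc v 4 ∈ E

theorem arc_ne_arc_add_one (hn : 4 < n) (v : Fin n) : arc v 4 ≠ arc (v + 1) 4 := by
  intro h
  have hv : v ∈ arc (v + 1) 4 := h ▸ mem_arc.mpr ⟨0, by omega, by simp⟩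
  obtain ⟨k, hk, hvk⟩ := mem_arc.mp hv
  have hshift : v + ((k + 1 : ℕ) : Fin n) = v + 1 + k := by push_cast; abel
  exact Fin.add_natCast_ne_self (by omega) (by omega) v (hshift.trans hvk)

theorem two_mul_card_blockStarts_le (hn : 4 < n) {E : Finset (Finset (Fin n))}
    (hE : EIh E = cyc n) : 2 * #(blockStarts E) ≤ n := by
  have hdisj : Disjoint (blockStarts E) ((blockStarts E).map (addRightEmbedding 1)) := by
    rw [disjoint_left]
    intro w hw hw'
    obtain ⟨v, hv, hvw⟩ := mem_map.mp hw'
    rw [addRightEmbedding_apply] at hvw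
    subst hvw
    have hsub : arc (v + 1) 3 ⊆ arc v 4 ∩ arc (v + 1) 4 := fun x hx => by
      obtain ⟨k, hk, rfl⟩ := mem_arc.mp hx
      exact mem_inter.mpr ⟨mem_arc.mpr ⟨k + 1, by omega, by push_cast; abel⟩,
        mem_arc.mpr ⟨k, by omega, rfl⟩⟩
    have h3 := card_arc (v + 1) (m := 3) (by omega) ▸ card_le_card hsub
    have hmem := inter_mem_EIh (mem_filter.mp hv).2 (mem_filter.mp hw).2
      (arc_ne_arc_add_one hn v) (by omega)
    have := card_le_two_of_mem_cyc (hE ▸ hmem)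
    omega
  have := card_le_univ (blockStarts E ∪ (blockStarts E).map (addRightEmbedding 1))
  rw [card_union_of_disjoint hdisj, card_map, Fintype.card_fin] at this
  omega

theorem sum_card_pairStarts_le (hn : 4 < n) {E : Finset (Finset (Fin n))}
    (h4 : ∀ e ∈ E, #e = 4) : ∑ e ∈ E, #(pairStarts e) ≤ 2 * #E + #(blockStarts E) := by
  set F := E.filter fun e => ∃ v, e = arc v 4
  have hF : #F ≤ #(blockStarts E) := by
    refine (card_le_card fun e he => ?_).trans (card_image_le (f := (arc · 4)))
    obtain ⟨heE, v, rfl⟩ := mem_filter.mp he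
    exact mem_image_of_mem _ (mem_filter.mpr ⟨mem_univ v, heE⟩)
  have hsplit : #F + #(E.filter fun e => ¬ ∃ v, e = arc v 4) = #E :=
    card_filter_add_card_filter_not _
  calc ∑ e ∈ E, #(pairStarts e)
      = ∑ e ∈ F, #(pairStarts e) +
          ∑ e ∈ E.filter (fun e => ¬ ∃ v, e = arc v 4), #(pairStarts e) :=
        (sum_filter_add_sum_filter_not _ _ _).symm
    _ ≤ ∑ e ∈ F, 3 + ∑ e ∈ E.filter (fun e => ¬ ∃ v, e = arc v 4), 2 := by
        gcongr with e he e he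
        · exact card_pairStarts_le_three hn (h4 e (mem_filter.mp he).1)
        · obtain ⟨heE, harc⟩ := mem_filter.mp he
          exact card_pairStarts_le_two_of_ne_arc hn (h4 e heE) (not_exists.mp harc)
    _ ≤ 2 * #E + #(blockStarts E) := by simp only [sum_const, smul_eq_mul]; omega

theorem three_mul_le_four_mul_card_of_EIh_eq_cyc (hn : 4 < n) {E : Finset (Finset (Fin n))}
    (h4 : ∀ e ∈ E, #e = 4) (hE : EIh E = cyc n) : 3 * n ≤ 4 * #E := by
  have := two_mul_le_sum_card_pairStarts hE
  have := sum_card_pairStarts_le hn h4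
  have := two_mul_card_blockStarts_le hn hE
  omega

theorem inter_eq_pair_of_adj (hn : 3 < n) {e f : Finset (Fin n)}
    (hadj : ∀ x ∈ e ∩ f, ∀ y ∈ e ∩ f, x ≠ y → y = x + 1 ∨ x = y + 1) {j : Fin n}
    (hj : {j, j + 1} ⊆ e ∩ f) : e ∩ f = {j, j + 1} := by
  refine Subset.antisymm (fun z hz => ?_) hj
  by_contra hz'
  simp only [mem_insert, mem_singleton, not_or] at hz'
  have hj0 := hj (mem_insert_self _ _)
  have hj1 := hj (mem_insert_of_mem (mem_singleton_self _))
  have hwrap : j + 1 + 1 + 1 ≠ j := by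
    have h3 := Fin.add_natCast_ne_self (k := 1 + 1 + 1) (by omega) (by omega) j
    simpa only [Nat.cast_add, Nat.cast_one, add_assoc] using h3
  rcases hadj z hz j hj0 hz'.1 with h1 | h1 <;> rcases hadj z hz (j + 1) hj1 hz'.2 with h2 | h2
  · exact hz'.1 (add_right_cancel h2).symm
  · rw [h2] at h1
    exact hwrap h1.symm
  · exact hz'.2 h1
  · exact hz'.2 h1

theorem EIh_eq_cyc_of_adj (hn : 3 < n) {E : Finset (Finset (Fin n))}
    (hadj : ∀ e ∈ E, ∀ f ∈ E, e ≠ f →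
      ∀ x ∈ e ∩ f, ∀ y ∈ e ∩ f, x ≠ y → y = x + 1 ∨ x = y + 1)
    (hcover : ∀ j : Fin n, ∃ e ∈ E, ∃ f ∈ E, e ≠ f ∧ {j, j + 1} ⊆ e ∩ f) :
    EIh E = cyc n := by
  have hcard : ∀ j : Fin n, #{j, j + 1} = 2 := fun j => card_pair fun h =>
    Fin.add_natCast_ne_self (k := 1) (by omega) (by omega) j (by simpa using h.symm)
  ext s
  constructor
  · intro hs
    obtain ⟨⟨e, f⟩, hp, rfl⟩ := mem_image.mp hs
    obtain ⟨hmem, hef, h2⟩ := mem_filter.mp hp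
    obtain ⟨he, hf⟩ := mem_product.mp hmem
    obtain ⟨x, hx, y, hy, hxy⟩ := one_lt_card.mp h2
    have hadj' := hadj e he f hf hef
    rcases hadj' x hx y hy hxy with rfl | rfl
    · rw [inter_eq_pair_of_adj hn hadj' (insert_subset hx (singleton_subset_iff.mpr hy))]
      exact mem_image_of_mem _ (mem_univ x)
    · rw [inter_eq_pair_of_adj hn hadj' (insert_subset hy (singleton_subset_iff.mpr hx))]
      exact mem_image_of_mem _ (mem_univ y)
  · intro hs
    obtain ⟨j, -, rfl⟩ := mem_image.mp hs
    obtain ⟨e, he, f, hf, hef, hsub⟩ := hcover j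
    have hinter := inter_eq_pair_of_adj hn (hadj e he f hf hef) hsub
    exact hinter ▸ inter_mem_EIh he hf hef (by rw [hinter, hcard])

def quad (n : ℕ) [NeZero n] (i p : ℕ) : Finset (Fin n) :=
  {(i : Fin n), ((i + 1 : ℕ) : Fin n), ((i + p : ℕ) : Fin n), ((i + p + 1 : ℕ) : Fin n)}

theorem mem_quad {x : Fin n} {i p : ℕ} :
    x ∈ quad n i p ↔ ∃ a ≤ p + 1, (a < 2 ∨ p ≤ a) ∧ ((i + a : ℕ) : Fin n) = x := by
  simp only [quad, mem_insert, mem_singleton]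
  constructor
  · rintro (rfl | rfl | rfl | rfl)
    exacts [⟨0, by omega, by omega, rfl⟩, ⟨1, by omega, by omega, rfl⟩,
      ⟨p, by omega, by omega, rfl⟩, ⟨p + 1, by omega, by omega, rfl⟩]
  · rintro ⟨a, ha, ha', rfl⟩
    obtain rfl | rfl | rfl | rfl : a = 0 ∨ a = 1 ∨ a = p ∨ a = p + 1 := by omega
    exacts [Or.inl rfl, Or.inr (Or.inl rfl), Or.inr (Or.inr (Or.inl rfl)),
      Or.inr (Or.inr (Or.inr rfl))]

theorem pair_subset_quad {i p a : ℕ} (ha : a = 0 ∨ a = 1 ∧ p = 2 ∨ a = p) {j : Fin n}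
    (hj : ((i + a : ℕ) : Fin n) = j) : {j, j + 1} ⊆ quad n i p := by
  rw [insert_subset_iff, singleton_subset_iff, mem_quad, mem_quad]
  exact ⟨⟨a, by omega, by omega, hj⟩,
    ⟨a + 1, by omega, by omega, by rw [← hj]; exact Nat.cast_succ _⟩⟩

/-- `quad n i 2` with odd `i` are the paths of the construction, `quad n i (n / 2)` with even
`2 ≤ i ≤ n / 2` its pairs of opposite cycle edges. -/
def QuadIndex (n i p : ℕ) : Prop :=
  (i < n ∧ i % 2 = 1 ∧ p = 2) ∨ (2 ≤ i ∧ i ≤ n / 2 ∧ i % 2 = 0 ∧ p = n / 2)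

def quadCover (n : ℕ) [NeZero n] : Finset (Finset (Fin n)) :=
  (((Finset.range n).filter fun i => i % 2 = 1).image fun i : ℕ =>
    ({(i : Fin n), ((i + 1 : ℕ) : Fin n), ((i + 2 : ℕ) : Fin n),
      ((i + 3 : ℕ) : Fin n)} : Finset (Fin n))) ∪
  (((Finset.Icc 2 (n / 2)).filter fun i => i % 2 = 0).image fun i : ℕ =>
    ({(i : Fin n), ((i + 1 : ℕ) : Fin n), ((n / 2 + i : ℕ) : Fin n),
      ((n / 2 + i + 1 : ℕ) : Fin n)} : Finset (Fin n)))

theorem quadCover_eq : quadCover n =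
    ((range n).filter (· % 2 = 1)).image (quad n · 2) ∪
      ((Icc 2 (n / 2)).filter (· % 2 = 0)).image (quad n · (n / 2)) := by
  simp only [quadCover, quad, Nat.add_comm _ (n / 2)]

theorem mem_quadCover {e : Finset (Fin n)} :
    e ∈ quadCover n ↔ ∃ i p, QuadIndex n i p ∧ quad n i p = e := by
  simp only [quadCover_eq, QuadIndex, mem_union, mem_image, mem_filter, mem_range, mem_Icc]
  constructor
  · rintro (⟨i, ⟨hi, hodd⟩, rfl⟩ | ⟨i, ⟨⟨hi2, hih⟩, heven⟩, rfl⟩)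
    exacts [⟨i, 2, Or.inl ⟨hi, hodd, rfl⟩, rfl⟩,
      ⟨i, n / 2, Or.inr ⟨hi2, hih, heven, rfl⟩, rfl⟩]
  · rintro ⟨i, p, ⟨hi, hodd, rfl⟩ | ⟨hi2, hih, heven, rfl⟩, rfl⟩
    exacts [Or.inl ⟨i, ⟨hi, hodd⟩, rfl⟩, Or.inr ⟨i, ⟨⟨hi2, hih⟩, heven⟩, rfl⟩]

theorem quad_inj (hn : 12 ≤ n) (hmod : n % 4 = 0) {i p j q : ℕ} (hip : QuadIndex n i p)
    (hjq : QuadIndex n j q) (h : quad n i p = quad n j q) : i = j ∧ p = q := by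
  have hi : (i : Fin n) ∈ quad n j q := h ▸ mem_quad.mpr ⟨0, by omega, by omega, rfl⟩
  have hj : (j : Fin n) ∈ quad n i p := h ▸ mem_quad.mpr ⟨0, by omega, by omega, rfl⟩
  obtain ⟨b, hb, hb', hib⟩ := mem_quad.mp hi
  obtain ⟨a, ha, ha', hja⟩ := mem_quad.mp hj
  unfold QuadIndex at hip hjq
  rcases hip with ⟨hi, hi2, rfl⟩ | ⟨hi, hih, hi2, rfl⟩ <;>
    rcases hjq with ⟨hj, hj2, rfl⟩ | ⟨hj, hjh, hj2, rfl⟩ <;>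
    rw [Fin.natCast_eq_natCast_iff_of_lt (by omega) (by omega)] at hib hja <;>
    omega

theorem quadCover_inter_adj (hn : 12 ≤ n) (hmod : n % 4 = 0) {e f : Finset (Fin n)}
    (he : e ∈ quadCover n) (hf : f ∈ quadCover n) (hef : e ≠ f) {x y : Fin n}
    (hx : x ∈ e ∩ f) (hy : y ∈ e ∩ f) (hxy : x ≠ y) : y = x + 1 ∨ x = y + 1 := by
  obtain ⟨i, p, hip, rfl⟩ := mem_quadCover.mp he
  obtain ⟨j, q, hjq, rfl⟩ := mem_quadCover.mp hf
  rw [mem_inter, mem_quad, mem_quad] at hx hy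
  obtain ⟨⟨a, ha, ha', rfl⟩, ⟨b, hb, hb', hab⟩⟩ := hx
  obtain ⟨⟨c, hc, hc', rfl⟩, ⟨d, hd, hd', hcd⟩⟩ := hy
  have hac : a ≠ c := by rintro rfl; exact hxy rfl
  suffices c = a + 1 ∨ a = c + 1 by
    rcases this with rfl | rfl
    exacts [Or.inl (Nat.cast_succ _), Or.inr (Nat.cast_succ _)]
  have hne : i ≠ j ∨ p ≠ q := by
    by_contra! h
    exact hef (by rw [h.1, h.2])
  clear hxy he hf hef
  unfold QuadIndex at hip hjq
  rcases hip with ⟨hi, hi2, rfl⟩ | ⟨hi, hih, hi2, rfl⟩ <;>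
    rcases hjq with ⟨hj, hj2, rfl⟩ | ⟨hj, hjh, hj2, rfl⟩ <;>
    rw [Fin.natCast_eq_natCast_iff_of_lt (by omega) (by omega)] at hab hcd
  · omega
  · omega
  · omega
  · -- distinct chords are disjoint
    clear hcd
    omega

theorem quadCover_covers_cycle_edge (hn : 12 ≤ n) (hmod : n % 4 = 0) (j : Fin n) :
    ∃ e ∈ quadCover n, ∃ f ∈ quadCover n, e ≠ f ∧ {j, j + 1} ⊆ e ∩ f := by
  obtain ⟨k, hk, rfl⟩ : ∃ k < n, (k : Fin n) = j :=
    ⟨j.val, j.isLt, Fin.cast_val_eq_self j⟩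
  -- `k` sits at offset `a` of `quad n i p` and at offset `a'` of `quad n i' p'`
  suffices ∃ i p a i' p' a', QuadIndex n i p ∧ QuadIndex n i' p' ∧ (i ≠ i' ∨ p ≠ p') ∧
      (a = 0 ∨ a = 1 ∧ p = 2 ∨ a = p) ∧ (a' = 0 ∨ a' = 1 ∧ p' = 2 ∨ a' = p') ∧
      (i + a = k ∨ i + a = k + n) ∧ (i' + a' = k ∨ i' + a' = k + n) by
    obtain ⟨i, p, a, i', p', a', hip, hip', hne, ha, ha', hk1, hk2⟩ := this
    have hcast : ∀ m < 2 * n, (m = k ∨ m = k + n) → (m : Fin n) = k := fun m hm h =>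
      (Fin.natCast_eq_natCast_iff_of_lt hm (by omega)).mpr (by omega)
    refine ⟨quad n i p, mem_quadCover.mpr ⟨i, p, hip, rfl⟩, quad n i' p',
      mem_quadCover.mpr ⟨i', p', hip', rfl⟩, fun h => ?_, subset_inter
        (pair_subset_quad ha (hcast _ (by unfold QuadIndex at hip; omega) hk1))
        (pair_subset_quad ha' (hcast _ (by unfold QuadIndex at hip'; omega) hk2))⟩
    have := quad_inj hn hmod hip hip' h
    omega
  unfold QuadIndex
  rcases (by omega : k = 0 ∨ k = 1 ∨ (k % 2 = 1 ∧ 3 ≤ k) ∨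
      (k % 2 = 0 ∧ 2 ≤ k ∧ k ≤ n / 2) ∨ (k % 2 = 0 ∧ n / 2 < k))
    with hk0 | hk1 | hodd | hlow | hhigh
  · exact ⟨n - 1, 2, 1, n / 2, n / 2, n / 2, by omega⟩
  · exact ⟨1, 2, 0, n - 1, 2, 2, by omega⟩
  · exact ⟨k, 2, 0, k - 2, 2, 2, by omega⟩
  · exact ⟨k - 1, 2, 1, k, n / 2, 0, by omega⟩
  · exact ⟨k - 1, 2, 1, k - n / 2, n / 2, n / 2, by omega⟩

theorem card_quadCover (hn : 12 ≤ n) (hmod : n % 4 = 0) : 4 * #(quadCover n) = 3 * n := by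
  have hodd : (range n).filter (· % 2 = 1) = (range (n / 2)).image (2 * · + 1) := by
    ext i
    simp only [mem_filter, mem_range, mem_image]
    exact ⟨fun h => ⟨i / 2, by omega, by omega⟩, by rintro ⟨m, hm, rfl⟩; omega⟩
  have heven : (Icc 2 (n / 2)).filter (· % 2 = 0) = (range (n / 4)).image (2 * · + 2) := by
    ext i
    simp only [mem_filter, mem_Icc, mem_range, mem_image]
    exact ⟨fun h => ⟨i / 2 - 1, by omega, by omega⟩, by rintro ⟨m, hm, rfl⟩; omega⟩
  rw [quadCover_eq, card_union_of_disjoint, card_image_of_injOn, card_image_of_injOn, hodd,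
    heven, card_image_of_injective _ (fun _ _ _ => by omega),
    card_image_of_injective _ (fun _ _ _ => by omega), card_range, card_range]
  · omega
  · intro i hi j hj h
    rw [mem_coe, mem_filter, mem_Icc] at hi hj
    exact (quad_inj hn hmod (Or.inr ⟨hi.1.1, hi.1.2, hi.2, rfl⟩)
      (Or.inr ⟨hj.1.1, hj.1.2, hj.2, rfl⟩) h).1
  · intro i hi j hj h
    rw [mem_coe, mem_filter, mem_range] at hi hj
    exact (quad_inj hn hmod (Or.inl ⟨hi.1, hi.2, rfl⟩) (Or.inl ⟨hj.1, hj.2, rfl⟩) h).1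
  · rw [disjoint_left]
    rintro e he he'
    obtain ⟨i, hi, rfl⟩ := mem_image.mp he
    obtain ⟨j, hj, h⟩ := mem_image.mp he'
    rw [mem_filter, mem_range] at hi
    rw [mem_filter, mem_Icc] at hj
    have := (quad_inj hn hmod (Or.inr ⟨hj.1.1, hj.1.2, hj.2, rfl⟩)
      (Or.inl ⟨hi.1, hi.2, rfl⟩) h).2
    omega

end

open Fin.NatCast in
theorem stmt_6 (n : ℕ) [NeZero n] (hn : 12 ≤ n) (hmod : n % 4 = 0) :
    letI E : Finset (Finset (Fin n)) :=
      (((Finset.range n).filter fun i => i % 2 = 1).image fun i : ℕ =>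
        ({(i : Fin n), ((i + 1 : ℕ) : Fin n), ((i + 2 : ℕ) : Fin n),
          ((i + 3 : ℕ) : Fin n)} : Finset (Fin n))) ∪
      (((Finset.Icc 2 (n / 2)).filter fun i => i % 2 = 0).image fun i : ℕ =>
        ({(i : Fin n), ((i + 1 : ℕ) : Fin n), ((n / 2 + i : ℕ) : Fin n),
          ((n / 2 + i + 1 : ℕ) : Fin n)} : Finset (Fin n)))
    EIh E = cyc n ∧ 4 * E.card = 3 * n ∧
      (∀ E' : Finset (Finset (Fin n)), (∀ e ∈ E', e.card = 4) → EIh E' = cyc n →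
        E.card ≤ E'.card) := by
  show EIh (quadCover n) = cyc n ∧ 4 * #(quadCover n) = 3 * n ∧
    ∀ E' : Finset (Finset (Fin n)), (∀ e ∈ E', #e = 4) → EIh E' = cyc n →
      #(quadCover n) ≤ #E'
  have hcard := card_quadCover hn hmod
  refine ⟨EIh_eq_cyc_of_adj (by omega) (fun e he f hf hef _ hx _ hy hxy =>
      quadCover_inter_adj hn hmod he hf hef hx hy hxy) (quadCover_covers_cycle_edge hn hmod), hcard,
    fun E' h4 hE' => ?_⟩
  have := three_mul_le_four_mul_card_of_EIh_eq_cyc (by omega) h4 hE'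
  omega
end

section
/- Let n ≥ 13 with n ≡ 1 (mod 4). The 4-uniform hypergraph H on V = {1,...,n} with hyperedges E = { {i, i+1, i+2, i+3} : i ∈ {1, 3, ..., n−2} } ∪ { {i, i+1, (n−1)/2 + i, (n−1)/2 + i + 1} : i ∈ {2, 4, ..., (n−1)/2} } ∪ { {n, 1, 2, 5} } (indices mod n) satisfies EI(H) = C_n and |E| = ⌈3n/4⌉. -/
open Finset
open Fin.NatCast

/-! Identify a vertex with its representative in `{0, …, n - 1}`. Since every hyperedge is
written with numbers below `2n`, each cast wraps around at most once, so membership in a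
hyperedge becomes a linear condition on the representative: an interval of length four
(possibly wrapping), two intervals of length two, or `{0, 1, 2, 5}`. Any two vertices shared by
two distinct hyperedges are then consecutive on the cycle; as no three vertices of a cycle of
length at least four are pairwise consecutive, every element of `EI(H)` is an edge of `C_n`.
Conversely `{j, j + 1}` is cut out by two explicit hyperedges. Finally, for `n = 4k + 1` the
`2k + k + 1` listed hyperedges are pairwise distinct. -/

namespace EIhCycle

lemma mem_EIh {n : ℕ} {E : Finset (Finset (Fin n))} {s : Finset (Fin n)} :
    s ∈ EIh E ↔ ∃ e₁ ∈ E, ∃ e₂ ∈ E, e₁ ≠ e₂ ∧ 2 ≤ (e₁ ∩ e₂).card ∧ e₁ ∩ e₂ = s := by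
  simp [EIh, and_assoc]

section Indices

variable (n : ℕ) {i : ℕ}

def blockIndices : Finset ℕ := (range n).filter fun i => i % 2 = 1

def crossIndices : Finset ℕ := (Icc 2 ((n - 1) / 2)).filter fun i => i % 2 = 0

variable {n}

lemma mem_blockIndices : i ∈ blockIndices n ↔ i < n ∧ i % 2 = 1 := by
  rw [blockIndices, mem_filter, mem_range]

lemma mem_crossIndices : i ∈ crossIndices n ↔ (2 ≤ i ∧ i ≤ (n - 1) / 2) ∧ i % 2 = 0 := by
  rw [crossIndices, mem_filter, mem_Icc]

lemma card_blockIndices : (blockIndices n).card = n / 2 := by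
  have : blockIndices n = (range (n / 2)).image fun t => 2 * t + 1 := by
    ext i
    simp only [mem_blockIndices, mem_image, mem_range]
    exact ⟨fun hi => ⟨i / 2, by omega, by omega⟩, by rintro ⟨t, ht, rfl⟩; omega⟩
  rw [this, card_image_of_injective _ fun a b h => by omega, card_range]

lemma card_crossIndices : (crossIndices n).card = (n - 1) / 4 := by
  have : crossIndices n = (range ((n - 1) / 4)).image fun t => 2 * t + 2 := by
    ext i
    simp only [mem_crossIndices, mem_image, mem_range]
    exact ⟨fun hi => ⟨i / 2 - 1, by omega, by omega⟩, by rintro ⟨t, ht, rfl⟩; omega⟩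
  rw [this, card_image_of_injective _ fun a b h => by omega, card_range]

end Indices

variable {n : ℕ} [NeZero n]

lemma eq_natCast_iff_of_lt_two_mul {m : ℕ} (hm : m < 2 * n) (x : Fin n) :
    x = (m : Fin n) ↔ x.val = m ∨ x.val + n = m := by
  rw [Fin.ext_iff, Fin.val_natCast]
  rcases lt_or_ge m n with h | h
  · rw [Nat.mod_eq_of_lt h]; omega
  · rw [Nat.mod_eq_sub_mod h, Nat.mod_eq_of_lt (by omega)]; omega

lemma eq_add_one_iff_val (x y : Fin n) :
    y = x + 1 ↔ y.val = x.val + 1 ∨ y.val = 0 ∧ x.val + 1 = n := by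
  obtain ⟨m, rfl⟩ : ∃ m, n = m + 1 := Nat.exists_eq_succ_of_ne_zero (NeZero.ne n)
  rw [Fin.ext_iff, Fin.val_add_one]
  split_ifs with h <;> rw [Fin.ext_iff, Fin.val_last] at h <;> omega

lemma mem_cyc_of_pairwise_consecutive (hn : 4 ≤ n) {s : Finset (Fin n)} (hs : 1 < s.card)
    (hadj : ∀ x ∈ s, ∀ y ∈ s, x.val < y.val → y.val = x.val + 1 ∨ x.val = 0 ∧ y.val + 1 = n) :
    s ∈ cyc n := by
  obtain ⟨x, hx, y, hy, hxy⟩ := one_lt_card.1 hs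
  wlog hlt : x.val < y.val generalizing x y
  · exact this y hy x hx hxy.symm (by rw [ne_eq, Fin.ext_iff] at hxy; omega)
  have hconsec := hadj x hx y hy hlt
  have hs : s = {x, y} := by
    ext z
    refine ⟨fun hz => ?_, fun hz => by rcases mem_insert.1 hz with rfl | hz <;> simp_all⟩
    by_contra hzxy
    rw [mem_insert, mem_singleton, not_or, Fin.ext_iff, Fin.ext_iff] at hzxy
    have := z.isLt
    have := hadj x hx z hz
    have := hadj z hz x hx
    have := hadj y hy z hz
    have := hadj z hz y hy
    omega
  rcases hconsec with h | h
  · rw [hs, (eq_add_one_iff_val x y).2 (.inl h)]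
    exact mem_image_of_mem _ (mem_univ x)
  · rw [hs, (eq_add_one_iff_val y x).2 (.inr h), pair_comm]
    exact mem_image_of_mem _ (mem_univ y)

lemma mem_EIh_of_inter_eq_adjPair {E : Finset (Finset (Fin n))} {e₁ e₂ : Finset (Fin n)}
    (h₁ : e₁ ∈ E) (h₂ : e₂ ∈ E) (hn : 2 ≤ n) {a z : Fin n} (hz₁ : z ∈ e₁) (hz₂ : z ∉ e₂)
    (h : ∀ x : Fin n, x ∈ e₁ ∧ x ∈ e₂ ↔
      x.val = a.val ∨ x.val = a.val + 1 ∨ x.val = 0 ∧ a.val + 1 = n) :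
    {a, a + 1} ∈ EIh E := by
  have ha : a ≠ a + 1 := fun h => by rw [eq_add_one_iff_val] at h; omega
  have hinter : e₁ ∩ e₂ = {a, a + 1} := by
    ext x
    rw [mem_inter, h, mem_insert, mem_singleton, eq_add_one_iff_val, Fin.ext_iff]
  exact mem_EIh.2 ⟨e₁, h₁, e₂, h₂, ne_of_mem_of_not_mem' hz₁ hz₂,
    by rw [hinter, card_pair ha], hinter⟩

section Hypergraph

variable (n) in
def blockEdge (i : ℕ) : Finset (Fin n) :=
  {(i : Fin n), ((i + 1 : ℕ) : Fin n), ((i + 2 : ℕ) : Fin n), ((i + 3 : ℕ) : Fin n)}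

variable (n) in
def crossEdge (i : ℕ) : Finset (Fin n) :=
  {(i : Fin n), ((i + 1 : ℕ) : Fin n), (((n - 1) / 2 + i : ℕ) : Fin n),
    (((n - 1) / 2 + i + 1 : ℕ) : Fin n)}

variable (n) in
def extraEdge : Finset (Fin n) := {(n : Fin n), 1, 2, 5}

variable (n) in
def hyperedges : Finset (Finset (Fin n)) :=
  (blockIndices n).image (blockEdge n) ∪ (crossIndices n).image (crossEdge n) ∪ {extraEdge n}

variable {x : Fin n} {i j : ℕ}

lemma mem_blockEdge (hn : 3 ≤ n) (hi : i < n) :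
    x ∈ blockEdge n i ↔ i ≤ x.val ∧ x.val ≤ i + 3 ∨ x.val + n ≤ i + 3 := by
  have := x.isLt
  simp (disch := omega) only [blockEdge, mem_insert, mem_singleton, eq_natCast_iff_of_lt_two_mul]
  omega

lemma mem_crossEdge (hi : i ≤ (n - 1) / 2) :
    x ∈ crossEdge n i ↔ i ≤ x.val ∧ x.val ≤ i + 1 ∨
      (n - 1) / 2 + i ≤ x.val ∧ x.val ≤ (n - 1) / 2 + i + 1 ∨ x.val + n = (n - 1) / 2 + i + 1 := by
  have := x.isLt
  simp (disch := omega) only [crossEdge, mem_insert, mem_singleton, eq_natCast_iff_of_lt_two_mul]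
  omega

lemma mem_extraEdge (hn : 6 ≤ n) :
    x ∈ extraEdge n ↔ x.val = 0 ∨ x.val = 1 ∨ x.val = 2 ∨ x.val = 5 := by
  rw [extraEdge, Fin.natCast_self]
  simp only [mem_insert, mem_singleton, Fin.ext_iff, Fin.coe_ofNat_eq_mod, Nat.zero_mod,
    Nat.mod_eq_of_lt (by omega : 1 < n), Nat.mod_eq_of_lt (by omega : 2 < n),
    Nat.mod_eq_of_lt (by omega : 5 < n)]

lemma mem_hyperedges {e : Finset (Fin n)} :
    e ∈ hyperedges n ↔ (∃ i, (i < n ∧ i % 2 = 1) ∧ blockEdge n i = e) ∨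
      (∃ i, ((2 ≤ i ∧ i ≤ (n - 1) / 2) ∧ i % 2 = 0) ∧ crossEdge n i = e) ∨ e = extraEdge n := by
  simp only [hyperedges, mem_union, mem_image, mem_singleton, mem_blockIndices, mem_crossIndices,
    or_assoc]

lemma blockEdge_injOn (hn : 7 ≤ n) : Set.InjOn (blockEdge n) (blockIndices n) := by
  intro i hi j hj h
  rw [mem_coe, mem_blockIndices] at hi hj
  have hi' := Finset.ext_iff.1 h ⟨i, hi.1⟩
  have hj' := Finset.ext_iff.1 h ⟨j, hj.1⟩
  simp (disch := omega) only [mem_blockEdge] at hi' hj'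
  omega

lemma crossEdge_injOn : Set.InjOn (crossEdge n) (crossIndices n) := by
  intro i hi j hj h
  rw [mem_coe, mem_crossIndices] at hi hj
  have hi' := Finset.ext_iff.1 h ⟨i, by omega⟩
  have hj' := Finset.ext_iff.1 h ⟨j, by omega⟩
  simp (disch := omega) only [mem_crossEdge] at hi' hj'
  omega

lemma blockEdge_ne_crossEdge (hn : 13 ≤ n) (hi : i ∈ blockIndices n) (hj : j ∈ crossIndices n) :
    blockEdge n i ≠ crossEdge n j := by
  intro h
  rw [mem_blockIndices] at hi
  rw [mem_crossIndices] at hj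
  have h₁ := Finset.ext_iff.1 h ⟨j, by omega⟩
  have h₂ := Finset.ext_iff.1 h ⟨(n - 1) / 2 + j, by omega⟩
  simp (disch := omega) only [mem_blockEdge, mem_crossEdge] at h₁ h₂
  omega

lemma blockEdge_ne_extraEdge (hn : 9 ≤ n) (hi : i ∈ blockIndices n) :
    blockEdge n i ≠ extraEdge n := by
  intro h
  rw [mem_blockIndices] at hi
  have h₁ := Finset.ext_iff.1 h ⟨0, by omega⟩
  have h₂ := Finset.ext_iff.1 h ⟨5, by omega⟩
  simp (disch := omega) only [mem_blockEdge, mem_extraEdge, true_or, or_true, iff_true] at h₁ h₂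
  omega

lemma crossEdge_ne_extraEdge (hn : 13 ≤ n) (hj : j ∈ crossIndices n) :
    crossEdge n j ≠ extraEdge n := by
  intro h
  rw [mem_crossIndices] at hj
  have h₁ := Finset.ext_iff.1 h ⟨0, by omega⟩
  have h₂ := Finset.ext_iff.1 h ⟨5, by omega⟩
  simp (disch := omega) only [mem_crossEdge, mem_extraEdge, true_or, or_true, iff_true] at h₁ h₂
  omega

lemma card_hyperedges (hn : 13 ≤ n) : (hyperedges n).card = n / 2 + (n - 1) / 4 + 1 := by
  have hdisj :
      Disjoint ((blockIndices n).image (blockEdge n)) ((crossIndices n).image (crossEdge n)) := by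
    simp only [disjoint_left, mem_image, not_exists, not_and]
    rintro _ ⟨i, hi, rfl⟩ j hj
    exact (blockEdge_ne_crossEdge hn hi hj).symm
  have hextra : extraEdge n ∉
      (blockIndices n).image (blockEdge n) ∪ (crossIndices n).image (crossEdge n) := by
    simp only [mem_union, mem_image, not_or, not_exists, not_and]
    exact ⟨fun i hi => blockEdge_ne_extraEdge (by omega) hi,
      fun j hj => crossEdge_ne_extraEdge hn hj⟩
  rw [hyperedges, card_union_of_disjoint (disjoint_singleton_right.2 hextra),
    card_union_of_disjoint hdisj, card_image_of_injOn (blockEdge_injOn (by omega)),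
    card_image_of_injOn crossEdge_injOn, card_blockIndices, card_crossIndices,
    card_singleton]

section
variable (hn : 13 ≤ n) (hmod : n % 4 = 1)
include hn hmod

lemma consecutive_of_mem_inter {e₁ e₂ : Finset (Fin n)} (h₁ : e₁ ∈ hyperedges n)
    (h₂ : e₂ ∈ hyperedges n) (hne : e₁ ≠ e₂) {x y : Fin n} (hx : x ∈ e₁ ∩ e₂)
    (hy : y ∈ e₁ ∩ e₂) (hxy : x.val < y.val) : y.val = x.val + 1 ∨ x.val = 0 ∧ y.val + 1 = n := by
  rw [mem_inter] at hx hy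
  have := y.isLt
  rcases mem_hyperedges.1 h₁ with ⟨i, hi, rfl⟩ | ⟨i, hi, rfl⟩ | rfl <;>
  rcases mem_hyperedges.1 h₂ with ⟨j, hj, rfl⟩ | ⟨j, hj, rfl⟩ | rfl
  -- two hyperedges of the same kind differ only if their indices do
  all_goals try replace hne : i ≠ j := fun h => hne (h ▸ rfl)
  all_goals try contradiction
  all_goals simp (disch := omega) only [mem_blockEdge, mem_crossEdge, mem_extraEdge] at hx hy
  all_goals omega

lemma adjPair_mem_EIh (a : Fin n) : {a, a + 1} ∈ EIh (hyperedges n) := by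
  have hblock {i : ℕ} (hi : i < n) (hodd : i % 2 = 1) : blockEdge n i ∈ hyperedges n :=
    mem_hyperedges.2 (.inl ⟨i, ⟨hi, hodd⟩, rfl⟩)
  have hcross {i : ℕ} (hi : 2 ≤ i ∧ i ≤ (n - 1) / 2) (heven : i % 2 = 0) :
      crossEdge n i ∈ hyperedges n :=
    mem_hyperedges.2 (.inr (.inl ⟨i, ⟨hi, heven⟩, rfl⟩))
  have hextra : extraEdge n ∈ hyperedges n := mem_hyperedges.2 (.inr (.inr rfl))
  have := a.isLt
  rcases (by omega : a.val % 2 = 1 ∧ 3 ≤ a.val ∨ a.val = 1 ∨ a.val = 0 ∨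
      a.val % 2 = 0 ∧ 2 ≤ a.val ∧ a.val ≤ (n - 1) / 2 ∨ a.val % 2 = 0 ∧ (n - 1) / 2 < a.val)
    with h | h | h | h | h <;>
  [refine mem_EIh_of_inter_eq_adjPair (hblock (i := a.val - 2) (by omega) (by omega))
      (hblock a.isLt h.1) (by omega) (z := ⟨a.val - 2, by omega⟩) ?_ ?_ fun x => ?_;
    refine mem_EIh_of_inter_eq_adjPair hextra (hblock (i := 1) (by omega) rfl) (by omega)
      (z := ⟨0, by omega⟩) ?_ ?_ fun x => ?_;
    refine mem_EIh_of_inter_eq_adjPair (hblock (i := n - 2) (by omega) (by omega)) hextra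
      (by omega) (z := ⟨n - 2, by omega⟩) ?_ ?_ fun x => ?_;
    refine mem_EIh_of_inter_eq_adjPair (hblock (i := a.val - 1) (by omega) (by omega))
      (hcross (i := a.val) (by omega) h.1) (by omega) (z := ⟨a.val - 1, by omega⟩) ?_ ?_
      fun x => ?_;
    refine mem_EIh_of_inter_eq_adjPair (hblock (i := a.val - 1) (by omega) (by omega))
      (hcross (i := a.val - (n - 1) / 2) (by omega) (by omega)) (by omega)
      (z := ⟨a.val - 1, by omega⟩) ?_ ?_ fun x => ?_] <;>
  simp (disch := omega) only [mem_blockEdge, mem_crossEdge, mem_extraEdge, true_or] <;>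
  omega

lemma EIh_hyperedges : EIh (hyperedges n) = cyc n := by
  ext s
  constructor
  · intro hs
    obtain ⟨e₁, h₁, e₂, h₂, hne, hcard, rfl⟩ := mem_EIh.1 hs
    exact mem_cyc_of_pairwise_consecutive (by omega) hcard fun x hx y hy =>
      consecutive_of_mem_inter hn hmod h₁ h₂ hne hx hy
  · intro hs
    obtain ⟨a, -, rfl⟩ := mem_image.1 hs
    exact adjPair_mem_EIh hn hmod a

end

end Hypergraph

end EIhCycle

theorem stmt_7 (n : ℕ) [NeZero n] (hn : 13 ≤ n) (hmod : n % 4 = 1) :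
    letI E : Finset (Finset (Fin n)) :=
      (((Finset.range n).filter fun i => i % 2 = 1).image fun i : ℕ =>
        ({(i : Fin n), ((i + 1 : ℕ) : Fin n), ((i + 2 : ℕ) : Fin n),
          ((i + 3 : ℕ) : Fin n)} : Finset (Fin n))) ∪
      (((Finset.Icc 2 ((n - 1) / 2)).filter fun i => i % 2 = 0).image fun i : ℕ =>
        ({(i : Fin n), ((i + 1 : ℕ) : Fin n), (((n - 1) / 2 + i : ℕ) : Fin n),
          (((n - 1) / 2 + i + 1 : ℕ) : Fin n)} : Finset (Fin n))) ∪
      {({(n : Fin n), 1, 2, 5} : Finset (Fin n))}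
    EIh E = cyc n ∧ E.card = (3 * n + 3) / 4 := by
  show EIh (EIhCycle.hyperedges n) = cyc n ∧ (EIhCycle.hyperedges n).card = (3 * n + 3) / 4
  refine ⟨EIhCycle.EIh_hyperedges hn hmod, ?_⟩
  rw [EIhCycle.card_hyperedges hn]
  omega
end

section
/- Let n ≥ 15 with n ≡ 3 (mod 4). The 4-uniform hypergraph H on V = {1,...,n} with hyperedges E = { {i, i+1, i+2, i+3} : i ∈ {1, 3, ..., n−2} } ∪ { {i, i+1, (n−1)/2 + i − 1, (n−1)/2 + i} : i ∈ {2, 4, ..., (n−1)/2 − 1} } ∪ { {n−1, n, (n+1)/2, (n+1)/2 + 1}, {n, 1, 2, 5} } (indices mod n) satisfies EI(H) = C_n and |E| = ⌈3n/4⌉. -/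
open Finset
open Fin.NatCast

/-!
Two facts about the hyperedges give the theorem. First, any two vertices shared by two distinct
hyperedges are adjacent on the cycle; as `C_n` is triangle-free for `n ≥ 4`, an intersection of
two hyperedges with at least two vertices is therefore an edge of `C_n`. Second, every edge
`{i, i + 1}` of `C_n` lies in two distinct hyperedges, whose intersection is then exactly
`{i, i + 1}`. Both facts, and the count of the hyperedges, are checked on representatives in
`{0, …, n - 1}`, where every hyperedge is a union of at most three intervals, so that each check
is linear arithmetic.
-/

def CycSucc (n a b : ℕ) : Prop :=
  (a + 1 < n ∧ b = a + 1) ∨ (a + 1 = n ∧ b = 0)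

namespace Fin

variable {n : ℕ} [NeZero n]

theorem add_one_eq_iff_cycSucc {x y : Fin n} : x + 1 = y ↔ CycSucc n x y := by
  rw [CycSucc, Fin.ext_iff, Fin.val_add, Fin.val_one', Nat.add_mod_mod]
  rcases Nat.lt_or_ge (x + 1) n with h | h
  · rw [Nat.mod_eq_of_lt h]; omega
  · rw [show (x : ℕ) + 1 = n by omega, Nat.mod_self]; omega

theorem cycSucc_add_one (x : Fin n) : CycSucc n x ↑(x + 1) :=
  add_one_eq_iff_cycSucc.mp rfl

/-- `C_n` is triangle-free for `n ≥ 4`. -/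
theorem eq_or_eq_add_one_of_adj (hn : 4 ≤ n) {x z : Fin n}
    (hxz : x + 1 = z ∨ z + 1 = x) (hxz' : x + 1 + 1 = z ∨ z + 1 = x + 1) :
    z = x ∨ z = x + 1 := by
  have hx := cycSucc_add_one x
  rw [@eq_comm _ z (x + 1)]
  simp only [add_one_eq_iff_cycSucc] at hxz hxz' ⊢
  simp only [CycSucc, ← Fin.val_inj] at hxz hxz' hx ⊢
  omega

theorem eq_pair_of_pairwise_adj (hn : 4 ≤ n) {X : Finset (Fin n)}
    (hX : ∀ y ∈ X, ∀ z ∈ X, y ≠ z → y + 1 = z ∨ z + 1 = y) {x : Fin n} (hx : x ∈ X)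
    (hx' : x + 1 ∈ X) : X = {x, x + 1} := by
  ext z
  refine ⟨fun hz => ?_, fun hz => ?_⟩
  · by_contra h
    simp only [mem_insert, mem_singleton, not_or] at h
    have := eq_or_eq_add_one_of_adj hn (hX x hx z hz (Ne.symm h.1)) (hX _ hx' z hz (Ne.symm h.2))
    tauto
  · rcases mem_insert.mp hz with rfl | hz
    · exact hx
    · rwa [mem_singleton.mp hz]

end Fin

theorem EIh_eq_cyc_of_adj_of_cover {n : ℕ} [NeZero n] (hn : 4 ≤ n)
    {E : Finset (Finset (Fin n))}
    (hadj : ∀ S ∈ E, ∀ T ∈ E, S ≠ T →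
      ∀ y ∈ S ∩ T, ∀ z ∈ S ∩ T, y ≠ z → y + 1 = z ∨ z + 1 = y)
    (hcover : ∀ x : Fin n, ∃ S ∈ E, ∃ T ∈ E, S ≠ T ∧ x ∈ S ∩ T ∧ x + 1 ∈ S ∩ T) :
    EIh E = cyc n := by
  ext e
  simp only [EIh, cyc, mem_image, mem_filter, mem_product, mem_univ, true_and, Prod.exists]
  constructor
  · rintro ⟨S, T, ⟨⟨hS, hT⟩, hST, hcard⟩, rfl⟩
    obtain ⟨y, hy, z, hz, hyz⟩ := one_lt_card.mp hcard
    rcases hadj S hS T hT hST y hy z hz hyz with rfl | rfl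
    · exact ⟨y, (Fin.eq_pair_of_pairwise_adj hn (hadj S hS T hT hST) hy hz).symm⟩
    · exact ⟨z, (Fin.eq_pair_of_pairwise_adj hn (hadj S hS T hT hST) hz hy).symm⟩
  · rintro ⟨x, rfl⟩
    obtain ⟨S, hS, T, hT, hST, hx, hx'⟩ := hcover x
    have hpair := Fin.eq_pair_of_pairwise_adj hn (hadj S hS T hT hST) hx hx'
    refine ⟨S, T, ⟨⟨hS, hT⟩, hST, ?_⟩, hpair⟩
    have hsucc := Fin.cycSucc_add_one x
    rw [hpair, card_pair (by rw [Ne, ← Fin.val_inj]; unfold CycSucc at hsucc; omega)]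

section NatCast

variable {n : ℕ} [NeZero n] {S T : Finset ℕ}

theorem mem_image_natCast_iff (hS : ∀ a ∈ S, a < n) {x : Fin n} :
    x ∈ S.image (Nat.cast : ℕ → Fin n) ↔ (x : ℕ) ∈ S := by
  rw [mem_image]
  constructor
  · rintro ⟨a, ha, rfl⟩
    rwa [Fin.val_cast_of_lt (hS a ha)]
  · exact fun hx => ⟨x, hx, Fin.cast_val_eq_self x⟩

theorem image_val_image_natCast (hS : ∀ a ∈ S, a < n) :
    (S.image (Nat.cast : ℕ → Fin n)).image Fin.val = S := by
  rw [image_image]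
  exact (image_congr fun a ha => Fin.val_cast_of_lt (hS a ha)).trans image_id

theorem image_natCast_inj (hS : ∀ a ∈ S, a < n) (hT : ∀ a ∈ T, a < n) :
    S.image (Nat.cast : ℕ → Fin n) = T.image Nat.cast ↔ S = T := by
  refine ⟨fun h => ?_, congrArg _⟩
  rw [← image_val_image_natCast hS, ← image_val_image_natCast hT, h]

theorem EIh_image_natCast_eq_cyc (hn : 4 ≤ n) {F : Finset (Finset ℕ)}
    (hF : ∀ S ∈ F, ∀ a ∈ S, a < n)
    (hadj : ∀ S ∈ F, ∀ T ∈ F, S ≠ T →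
      ∀ a ∈ S ∩ T, ∀ b ∈ S ∩ T, a < b → b = a + 1 ∨ a = 0 ∧ b + 1 = n)
    (hcover : ∀ a b, CycSucc n a b →
      ∃ S ∈ F, ∃ T ∈ F, S ≠ T ∧ a ∈ S ∩ T ∧ b ∈ S ∩ T) :
    EIh (F.image (image Nat.cast)) = cyc n := by
  have mem_inter_iff {S T : Finset ℕ} (hS : S ∈ F) (hT : T ∈ F) {x : Fin n} :
      x ∈ S.image Nat.cast ∩ T.image Nat.cast ↔ (x : ℕ) ∈ S ∩ T := by
    rw [mem_inter, mem_inter, mem_image_natCast_iff (hF S hS), mem_image_natCast_iff (hF T hT)]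
  apply EIh_eq_cyc_of_adj_of_cover hn
  · simp only [forall_mem_image]
    intro S hS T hT hST y hy z hz hyz
    rw [mem_inter_iff hS hT] at hy hz
    rw [Ne, image_natCast_inj (hF S hS) (hF T hT)] at hST
    rw [Fin.add_one_eq_iff_cycSucc, Fin.add_one_eq_iff_cycSucc, CycSucc, CycSucc]
    have := y.isLt
    have := z.isLt
    rcases lt_or_gt_of_ne (Fin.val_injective.ne hyz) with h | h
    · have := hadj S hS T hT hST y hy z hz h
      omega
    · have := hadj S hS T hT hST z hz y hy h
      omega
  · intro x
    obtain ⟨S, hS, T, hT, hST, hx, hx'⟩ := hcover x _ (Fin.cycSucc_add_one x)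
    refine ⟨_, mem_image_of_mem _ hS, _, mem_image_of_mem _ hT, ?_, ?_, ?_⟩
    · rwa [Ne, image_natCast_inj (hF S hS) (hF T hT)]
    · rwa [mem_inter_iff hS hT]
    · rwa [mem_inter_iff hS hT]

end NatCast

section Construction

variable {n i a : ℕ}

def blockEdge (n i : ℕ) : Finset ℕ := {i, i + 1, (i + 2) % n, (i + 3) % n}

def chordEdge (n i : ℕ) : Finset ℕ := {i, i + 1, (n - 1) / 2 + i - 1, (n - 1) / 2 + i}

def extraEdge₁ (n : ℕ) : Finset ℕ := {n - 1, 0, (n + 1) / 2, (n + 1) / 2 + 1}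

def extraEdge₂ : Finset ℕ := {0, 1, 2, 5}

def blockEdges (n : ℕ) : Finset (Finset ℕ) :=
  ((range n).filter (· % 2 = 1)).image (blockEdge n)

def chordEdges (n : ℕ) : Finset (Finset ℕ) :=
  ((Icc 2 ((n - 1) / 2 - 1)).filter (· % 2 = 0)).image (chordEdge n)

/-- The hyperedges of `H`, each vertex represented by its residue in `{0, …, n - 1}`. -/
def natEdges (n : ℕ) : Finset (Finset ℕ) :=
  blockEdges n ∪ chordEdges n ∪ {extraEdge₁ n, extraEdge₂}

theorem natEdges_image_natCast [NeZero n] :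
    (natEdges n).image (image Nat.cast) =
      (((Finset.range n).filter fun i => i % 2 = 1).image fun i : ℕ =>
        ({(i : Fin n), ((i + 1 : ℕ) : Fin n), ((i + 2 : ℕ) : Fin n),
          ((i + 3 : ℕ) : Fin n)} : Finset (Fin n))) ∪
      (((Finset.Icc 2 ((n - 1) / 2 - 1)).filter fun i => i % 2 = 0).image fun i : ℕ =>
        ({(i : Fin n), ((i + 1 : ℕ) : Fin n), (((n - 1) / 2 + i - 1 : ℕ) : Fin n),
          (((n - 1) / 2 + i : ℕ) : Fin n)} : Finset (Fin n))) ∪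
      {({((n - 1 : ℕ) : Fin n), (n : Fin n), (((n + 1) / 2 : ℕ) : Fin n),
          (((n + 1) / 2 + 1 : ℕ) : Fin n)} : Finset (Fin n)),
        ({(n : Fin n), 1, 2, 5} : Finset (Fin n))} := by
  simp [natEdges, blockEdges, chordEdges, blockEdge, chordEdge, extraEdge₁, extraEdge₂,
    image_union, image_image, Function.comp_def, ← CharP.cast_eq_mod (Fin n) n]

theorem mem_blockEdge (hi : i + 1 < n) :
    a ∈ blockEdge n i ↔ a < n ∧ (i ≤ a ∧ a ≤ i + 3 ∨ a + n ≤ i + 3) := by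
  simp only [blockEdge, mem_insert, mem_singleton]
  rcases (by omega : i + 3 < n ∨ i + 3 = n ∨ i + 2 = n) with h | h | h
  · rw [Nat.mod_eq_of_lt (by omega : i + 2 < n), Nat.mod_eq_of_lt h]; omega
  · rw [Nat.mod_eq_of_lt (by omega : i + 2 < n), h, Nat.mod_self]; omega
  · rw [h, Nat.mod_self, show i + 3 = 1 + n * 1 by omega, Nat.add_mul_mod_self_left,
      Nat.mod_eq_of_lt (by omega : 1 < n)]
    omega

theorem mem_chordEdge (hi : 1 ≤ i) :
    a ∈ chordEdge n i ↔
      i ≤ a ∧ a ≤ i + 1 ∨ (n - 1) / 2 + i ≤ a + 1 ∧ a ≤ (n - 1) / 2 + i := by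
  simp only [chordEdge, mem_insert, mem_singleton]
  omega

theorem mem_extraEdge₁ :
    a ∈ extraEdge₁ n ↔ a = n - 1 ∨ a = 0 ∨ (n + 1) / 2 ≤ a ∧ a ≤ (n + 1) / 2 + 1 := by
  simp only [extraEdge₁, mem_insert, mem_singleton]
  omega

theorem mem_extraEdge₂ : a ∈ extraEdge₂ ↔ a ≤ 2 ∨ a = 5 := by
  simp only [extraEdge₂, mem_insert, mem_singleton]
  omega

theorem mem_natEdges {S : Finset ℕ} :
    S ∈ natEdges n ↔ (∃ i < n, i % 2 = 1 ∧ blockEdge n i = S) ∨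
      (∃ i, 2 ≤ i ∧ i ≤ (n - 1) / 2 - 1 ∧ i % 2 = 0 ∧ chordEdge n i = S) ∨
      S = extraEdge₁ n ∨ S = extraEdge₂ := by
  simp only [natEdges, blockEdges, chordEdges, mem_union, mem_image, mem_filter, mem_range,
    mem_Icc, mem_insert, mem_singleton, or_assoc, and_assoc]

theorem lt_of_mem_natEdges (hn : 6 ≤ n) (hodd : n % 2 = 1) {S : Finset ℕ}
    (hS : S ∈ natEdges n) (ha : a ∈ S) : a < n := by
  rw [mem_natEdges] at hS
  rcases hS with ⟨i, hin, hi, rfl⟩ | ⟨i, hi2, hin, hi, rfl⟩ | rfl | rfl <;>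
    simp (disch := omega) only [mem_blockEdge, mem_chordEdge, mem_extraEdge₁,
      mem_extraEdge₂] at ha <;>
    omega

theorem natEdges_inter_adj (hn : 13 ≤ n) (hodd : n % 2 = 1) {S T : Finset ℕ}
    (hS : S ∈ natEdges n) (hT : T ∈ natEdges n) (hST : S ≠ T) {a b : ℕ} (ha : a ∈ S ∩ T)
    (hb : b ∈ S ∩ T) (hab : a < b) : b = a + 1 ∨ a = 0 ∧ b + 1 = n := by
  rw [mem_natEdges] at hS hT
  rw [mem_inter] at ha hb
  rcases hS with ⟨i, hin, hi, rfl⟩ | ⟨i, hi2, hin, hi, rfl⟩ | rfl | rfl <;>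
    rcases hT with ⟨j, hjn, hj, rfl⟩ | ⟨j, hj2, hjn, hj, rfl⟩ | rfl | rfl <;>
    simp (disch := omega) only [mem_blockEdge, mem_chordEdge, mem_extraEdge₁,
      mem_extraEdge₂] at ha hb <;>
    try (have hij : i ≠ j := by rintro rfl; exact hST rfl)
  all_goals first | exact absurd rfl hST | omega

theorem exists_two_natEdges_of_cycSucc (hn : 11 ≤ n) (hmod : n % 4 = 3) {b : ℕ}
    (hab : CycSucc n a b) :
    ∃ S ∈ natEdges n, ∃ T ∈ natEdges n, S ≠ T ∧ a ∈ S ∩ T ∧ b ∈ S ∩ T := by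
  have hA {i : ℕ} (hin : i < n) (hi : i % 2 = 1) : blockEdge n i ∈ natEdges n :=
    mem_natEdges.2 (Or.inl ⟨i, hin, hi, rfl⟩)
  have hB {i : ℕ} (hi2 : 2 ≤ i) (hin : i ≤ (n - 1) / 2 - 1) (hi : i % 2 = 0) :
      chordEdge n i ∈ natEdges n :=
    mem_natEdges.2 (Or.inr (Or.inl ⟨i, hi2, hin, hi, rfl⟩))
  have hD₁ : extraEdge₁ n ∈ natEdges n := mem_natEdges.2 (Or.inr (Or.inr (Or.inl rfl)))
  have hD₂ : extraEdge₂ ∈ natEdges n := mem_natEdges.2 (Or.inr (Or.inr (Or.inr rfl)))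
  rcases hab with ⟨hab, rfl⟩ | ⟨hab, rfl⟩
  · rcases (by omega : a = 0 ∨ a = 1 ∨ a % 2 = 1 ∧ 3 ≤ a ∨
        a % 2 = 0 ∧ 2 ≤ a ∧ a < (n - 1) / 2 ∨ a % 2 = 0 ∧ (n - 1) / 2 < a) with
      rfl | rfl | ⟨ha, ha'⟩ | ⟨ha, ha', ha''⟩ | ⟨ha, ha'⟩
    · refine ⟨_, hA (i := n - 2) (by omega) (by omega), _, hD₂,
        ne_of_mem_of_not_mem' (a := n - 2) ?_ ?_, ?_, ?_⟩
      all_goals (simp (disch := omega) [mem_blockEdge, mem_extraEdge₂]; omega)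
    · refine ⟨_, hD₂, _, hA (i := 1) (by omega) rfl,
        ne_of_mem_of_not_mem' (a := 0) ?_ ?_, ?_, ?_⟩
      all_goals simp (disch := omega) [mem_blockEdge, mem_extraEdge₂] <;> omega
    · refine ⟨_, hA (i := a - 2) (by omega) (by omega), _, hA (i := a) (by omega) ha,
        ne_of_mem_of_not_mem' (a := a - 2) ?_ ?_, ?_, ?_⟩
      all_goals (simp (disch := omega) [mem_blockEdge]; omega)
    · refine ⟨_, hA (i := a - 1) (by omega) (by omega), _, hB (i := a) ha' (by omega) ha,
        ne_of_mem_of_not_mem' (a := a - 1) ?_ ?_, ?_, ?_⟩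
      all_goals (simp (disch := omega) [mem_blockEdge, mem_chordEdge]; omega)
    · refine ⟨_, hA (i := a - 1) (by omega) (by omega), _,
        hB (i := a - (n - 1) / 2 + 1) (by omega) (by omega) (by omega),
        ne_of_mem_of_not_mem' (a := a - 1) ?_ ?_, ?_, ?_⟩
      all_goals (simp (disch := omega) [mem_blockEdge, mem_chordEdge]; omega)
  · refine ⟨_, hA (i := n - 2) (by omega) (by omega), _, hD₁,
      ne_of_mem_of_not_mem' (a := n - 2) ?_ ?_, ?_, ?_⟩
    all_goals (simp (disch := omega) [mem_blockEdge, mem_extraEdge₁]; omega)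

theorem card_blockEdges (hn : 7 ≤ n) (hodd : n % 2 = 1) : #(blockEdges n) = n / 2 := by
  rw [blockEdges, card_image_of_injOn, ← Nat.card_multiples n 2]
  · exact congrArg card (filter_congr fun i _ => by omega)
  intro i hi j hj h
  simp only [mem_coe, mem_filter, mem_range] at hi hj
  have hij : i ∈ blockEdge n j := h ▸ mem_insert_self _ _
  have hji : j ∈ blockEdge n i := h.symm ▸ mem_insert_self _ _
  rw [mem_blockEdge (by omega)] at hij hji
  omega

theorem card_chordEdges : #(chordEdges n) = ((n - 1) / 2 - 1) / 2 := by
  rw [chordEdges, card_image_of_injOn, ← Nat.Ioc_filter_dvd_card_eq_div ((n - 1) / 2 - 1) 2]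
  · exact congrArg card (Finset.ext fun i => by simp only [mem_filter, mem_Icc, mem_Ioc]; omega)
  intro i hi j hj h
  simp only [mem_coe, mem_filter, mem_Icc] at hi hj
  have hij : i ∈ chordEdge n j := h ▸ mem_insert_self _ _
  have hji : j ∈ chordEdge n i := h.symm ▸ mem_insert_self _ _
  rw [mem_chordEdge (by omega)] at hij hji
  omega

theorem disjoint_blockEdges_chordEdges (hn : 5 ≤ n) (hodd : n % 2 = 1) :
    Disjoint (blockEdges n) (chordEdges n) := by
  simp only [blockEdges, chordEdges, disjoint_left, mem_image, mem_filter, mem_range, mem_Icc,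
    not_exists, not_and]
  rintro _ ⟨i, ⟨hin, hi⟩, rfl⟩ j ⟨⟨hj2, hjn⟩, hj⟩ h
  have hij : i ∈ chordEdge n j := h ▸ mem_insert_self _ _
  have hji : j ∈ blockEdge n i := h.symm ▸ mem_insert_self _ _
  rw [mem_chordEdge (by omega)] at hij
  rw [mem_blockEdge (by omega)] at hji
  omega

theorem extraEdge₁_notMem (hn : 13 ≤ n) (hmod : n % 4 = 3) :
    extraEdge₁ n ∉ blockEdges n ∪ chordEdges n := by
  simp only [blockEdges, chordEdges, mem_union, mem_image, mem_filter, mem_range, mem_Icc,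
    not_or, not_exists, not_and]
  refine ⟨fun i ⟨hin, hi⟩ h => ?_, fun j ⟨⟨hj2, hjn⟩, hj⟩ h => ?_⟩
  · have h1 : i ∈ extraEdge₁ n := h ▸ mem_insert_self _ _
    have h2 : n - 1 ∈ blockEdge n i := h ▸ mem_insert_self _ _
    rw [mem_extraEdge₁] at h1
    rw [mem_blockEdge (by omega)] at h2
    omega
  · have h1 : j ∈ extraEdge₁ n := h ▸ mem_insert_self _ _
    rw [mem_extraEdge₁] at h1
    omega

theorem extraEdge₂_notMem (hn : 9 ≤ n) (hodd : n % 2 = 1) :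
    extraEdge₂ ∉ blockEdges n ∪ chordEdges n := by
  simp only [blockEdges, chordEdges, mem_union, mem_image, mem_filter, mem_range, mem_Icc,
    not_or, not_exists, not_and]
  refine ⟨fun i ⟨hin, hi⟩ h => ?_, fun j ⟨⟨hj2, hjn⟩, hj⟩ h => ?_⟩
  · have h1 : i ∈ extraEdge₂ := h ▸ mem_insert_self _ _
    have h2 : 0 ∈ blockEdge n i := h ▸ mem_insert_self _ _
    rw [mem_extraEdge₂] at h1
    rw [mem_blockEdge (by omega)] at h2
    omega
  · have h1 : j ∈ extraEdge₂ := h ▸ mem_insert_self _ _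
    have h2 : 0 ∈ chordEdge n j := h ▸ mem_insert_self _ _
    rw [mem_extraEdge₂] at h1
    rw [mem_chordEdge (by omega)] at h2
    omega

theorem card_natEdges (hn : 15 ≤ n) (hmod : n % 4 = 3) :
    #(natEdges n) = (3 * n + 3) / 4 := by
  have hextra : extraEdge₁ n ≠ extraEdge₂ :=
    ne_of_mem_of_not_mem' (a := n - 1) (mem_insert_self _ _) (by rw [mem_extraEdge₂]; omega)
  rw [natEdges, card_union_of_disjoint,
    card_union_of_disjoint (disjoint_blockEdges_chordEdges (by omega) (by omega)),
    card_blockEdges (by omega) (by omega), card_chordEdges, card_pair hextra]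
  · omega
  exact disjoint_insert_right.2 ⟨extraEdge₁_notMem (by omega) hmod,
    disjoint_singleton_right.2 (extraEdge₂_notMem (by omega) (by omega))⟩

end Construction

theorem stmt_9 (n : ℕ) [NeZero n] (hn : 15 ≤ n) (hmod : n % 4 = 3) :
    letI E : Finset (Finset (Fin n)) :=
      (((Finset.range n).filter fun i => i % 2 = 1).image fun i : ℕ =>
        ({(i : Fin n), ((i + 1 : ℕ) : Fin n), ((i + 2 : ℕ) : Fin n),
          ((i + 3 : ℕ) : Fin n)} : Finset (Fin n))) ∪
      (((Finset.Icc 2 ((n - 1) / 2 - 1)).filter fun i => i % 2 = 0).image fun i : ℕ =>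
        ({(i : Fin n), ((i + 1 : ℕ) : Fin n), (((n - 1) / 2 + i - 1 : ℕ) : Fin n),
          (((n - 1) / 2 + i : ℕ) : Fin n)} : Finset (Fin n))) ∪
      {({((n - 1 : ℕ) : Fin n), (n : Fin n), (((n + 1) / 2 : ℕ) : Fin n),
          (((n + 1) / 2 + 1 : ℕ) : Fin n)} : Finset (Fin n)),
        ({(n : Fin n), 1, 2, 5} : Finset (Fin n))}
    EIh E = cyc n ∧ E.card = (3 * n + 3) / 4 := by
  rw [← natEdges_image_natCast]
  have hlt {S : Finset ℕ} (hS : S ∈ natEdges n) : ∀ a ∈ S, a < n :=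
    fun _ ha => lt_of_mem_natEdges (by omega) (by omega) hS ha
  refine ⟨EIh_image_natCast_eq_cyc (by omega) (fun _ hS => hlt hS)
    (fun _ hS _ hT hST _ ha _ hb => natEdges_inter_adj (by omega) (by omega) hS hT hST ha hb)
    (fun _ _ => exists_two_natEdges_of_cycSucc (by omega) hmod), ?_⟩
  rw [card_image_of_injOn fun S hS T hT h => (image_natCast_inj (hlt hS) (hlt hT)).1 h,
    card_natEdges hn hmod]
end

section
/- Let H = (V, E) be a 5-uniform hypergraph with EI(H) = C_n such that every hyperedge of H is a (3,2)-hyperedge (i.e., consists of one 3-section and one 2-section on the cycle C_n). Then |E| ≥ 2n/3. -/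
open Finset

/-- `e` is a (3,2)-hyperedge: one maximal run of 3 consecutive cycle vertices and one
disjoint maximal run of 2 consecutive cycle vertices. -/
def IsSection32 {n : ℕ} [NeZero n] (e : Finset (Fin n)) : Prop :=
  ∃ i j : Fin n, e = {i, i + 1, i + 2, j, j + 1} ∧ e.card = 5 ∧
    (i - 1) ∉ e ∧ (i + 3) ∉ e ∧ (j - 1) ∉ e ∧ (j + 2) ∉ e


/- Double counting of the incidences "cycle edge ⊆ hyperedge": every edge of `C_n` is the
intersection of two distinct hyperedges, so lies in at least two of them, while a
(3,2)-hyperedge contains at most three edges of `C_n`. Hence `2 n ≤ 3 |E|`. -/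

lemma two_le_card_supersets_of_mem_EIh {n : ℕ} {E : Finset (Finset (Fin n))} {c : Finset (Fin n)}
    (hc : c ∈ EIh E) : 2 ≤ #{e ∈ E | c ⊆ e} := by
  simp only [EIh, mem_image, mem_filter, mem_product] at hc
  obtain ⟨⟨e₁, e₂⟩, ⟨⟨he₁, he₂⟩, hne, -⟩, rfl⟩ := hc
  exact one_lt_card.mpr ⟨e₁, by simp [he₁, inter_subset_left],
    e₂, by simp [he₂, inter_subset_right], hne⟩

section
open Fin.CommRing

variable {n : ℕ} [NeZero n]

lemma Fin.two_ne_zero_of_three_le (hn : 3 ≤ n) : (2 : Fin n) ≠ 0 := by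
  rw [Ne, Fin.ext_iff, Fin.coe_ofNat_eq_mod, Fin.val_zero, Nat.mod_eq_of_lt (by omega)]
  omega

lemma card_cyc (hn : 3 ≤ n) : #(cyc n) = n := by
  rw [cyc, card_image_of_injective _ ?_, card_univ, Fintype.card_fin]
  intro i j h
  have hcoe := congrArg (fun s : Finset (Fin n) => (s : Set (Fin n))) h
  simp only [coe_pair, Set.pair_eq_pair_iff] at hcoe
  rcases hcoe with ⟨hij, -⟩ | ⟨hij, hji⟩
  · exact hij
  · refine absurd ?_ (Fin.two_ne_zero_of_three_le hn)
    linear_combination hji - hij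

lemma IsSection32.card_cyc_subset_le_three {e : Finset (Fin n)} (he : IsSection32 e) :
    #{c ∈ cyc n | c ⊆ e} ≤ 3 := by
  obtain ⟨i, j, rfl, -, -, hi3, -, hj2⟩ := he
  refine (card_le_card (t := {{i, i + 1}, {i + 1, i + 2}, {j, j + 1}}) ?_).trans card_le_three
  intro c hc
  simp only [mem_filter, cyc, mem_image, mem_univ, true_and] at hc
  obtain ⟨⟨k, rfl⟩, hsub⟩ := hc
  have hk : k ∈ _ := hsub (mem_insert_self k _)
  have hk1 : k + 1 ∈ _ := hsub (by simp)
  simp only [mem_insert, mem_singleton] at hk ⊢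
  rcases hk with rfl | rfl | rfl | rfl | rfl
  · exact .inl rfl
  · exact .inr (.inl (by rw [add_assoc, one_add_one_eq_two]))
  · exact absurd (by rwa [add_assoc, two_add_one_eq_three] at hk1) hi3
  · exact .inr (.inr rfl)
  · exact absurd (by rwa [add_assoc, one_add_one_eq_two] at hk1) hj2

end

theorem stmt_11_general (n : ℕ) [NeZero n] (hn : 3 ≤ n) (E : Finset (Finset (Fin n)))
    (hEI : EIh E = cyc n)
    (h32 : ∀ e ∈ E, IsSection32 e) : 2 * n ≤ 3 * E.card := by
  have hdouble : #(cyc n) * 2 ≤ #E * 3 :=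
    card_mul_le_card_mul (fun c e : Finset (Fin n) => c ⊆ e)
      (fun c hc => two_le_card_supersets_of_mem_EIh (hEI ▸ hc))
      (fun e he => (h32 e he).card_cyc_subset_le_three)
  rw [card_cyc hn] at hdouble
  omega

theorem stmt_11 (n : ℕ) [NeZero n] (hn : 3 ≤ n) (E : Finset (Finset (Fin n)))
    (hunif : ∀ e ∈ E, e.card = 5) (hEI : EIh E = cyc n)
    (h32 : ∀ e ∈ E, IsSection32 e) : 2 * n ≤ 3 * E.card :=
  stmt_11_general n hn E hEI h32
end

section
/- The optimal value of the linear program: minimize x5 + x4 + x32 + x3 + x22 + x2 subject to 4x5 + 3x4 + 3x32 + 2x3 + 2x22 + x2 ≥ 2, 2x5 + x4 ≤ x32 + 2x22 + x2, and x5, x4, x32, x3, x22, x2 ≥ 0, equals 3/5, attained at x32 = 2/5, x5 = 1/5 and all other variables 0. -/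
/-- The weights `3, 1` are ten times the optimal dual solution `(3/10, 1/10)` of the LP. -/
theorem covering_balance_combination_le (x5 x4 x32 x3 x22 x2 : ℝ)
    (h4 : 0 ≤ x4) (h3 : 0 ≤ x3) (h22 : 0 ≤ x22) (h2 : 0 ≤ x2) :
    3 * (4 * x5 + 3 * x4 + 3 * x32 + 2 * x3 + 2 * x22 + x2)
        + (x32 + 2 * x22 + x2 - (2 * x5 + x4))
      ≤ 10 * (x5 + x4 + x32 + x3 + x22 + x2) := by
  linarith

theorem stmt_17 :
    IsLeast {v : ℝ | ∃ x5 x4 x32 x3 x22 x2 : ℝ,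
      2 ≤ 4 * x5 + 3 * x4 + 3 * x32 + 2 * x3 + 2 * x22 + x2 ∧
      2 * x5 + x4 ≤ x32 + 2 * x22 + x2 ∧
      0 ≤ x5 ∧ 0 ≤ x4 ∧ 0 ≤ x32 ∧ 0 ≤ x3 ∧ 0 ≤ x22 ∧ 0 ≤ x2 ∧
      v = x5 + x4 + x32 + x3 + x22 + x2} (3 / 5) ∧
    (2 ≤ 4 * (1 / 5 : ℝ) + 3 * 0 + 3 * (2 / 5) + 2 * 0 + 2 * 0 + 0 ∧
      2 * (1 / 5 : ℝ) + 0 ≤ 2 / 5 + 2 * 0 + 0 ∧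
      (1 / 5 : ℝ) + 0 + 2 / 5 + 0 + 0 + 0 = 3 / 5) := by
  refine ⟨⟨⟨1 / 5, 0, 2 / 5, 0, 0, 0, by norm_num⟩, ?_⟩, by norm_num⟩
  rintro v ⟨x5, x4, x32, x3, x22, x2, hcover, hbalance, -, h4, -, h3, h22, h2, rfl⟩
  linarith [covering_balance_combination_le x5 x4 x32 x3 x22 x2 h4 h3 h22 h2]
end

section
/- Let H = (V, E) be a 5-uniform hypergraph with EI(H) = C_n. If e ∈ E is a (3,2)-hyperedge, then e contributes to at most 3 edges of C_n; that is, the set of edges of C_n of the form e ∩ e' with e' ∈ E, e' ≠ e, |e ∩ e'| ≥ 2, has cardinality at most 3. -/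
open Finset

/-
A cycle edge `{k, k + 1}` lying in `e = {i, i+1, i+2} ∪ {j, j+1}` must start at a vertex of `e`
whose successor is again in `e`. Maximality of the two runs (`i + 3 ∉ e`, `j + 2 ∉ e`) rules out
`k = i + 2` and `k = j + 1`, leaving only the three edges `{i, i+1}`, `{i+1, i+2}`, `{j, j+1}`.
Every edge `e ∩ e'` that `e` contributes is a cycle edge inside `e`.
-/

section

variable {n : ℕ} [NeZero n]

theorem pair_mem_of_subset_section32 {i j k : Fin n}
    (hi : i + 3 ∉ ({i, i + 1, i + 2, j, j + 1} : Finset (Fin n)))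
    (hj : j + 2 ∉ ({i, i + 1, i + 2, j, j + 1} : Finset (Fin n)))
    (hk : ({k, k + 1} : Finset (Fin n)) ⊆ {i, i + 1, i + 2, j, j + 1}) :
    ({k, k + 1} : Finset (Fin n)) ∈
      ({{i, i + 1}, {i + 1, i + 2}, {j, j + 1}} : Finset (Finset (Fin n))) := by
  have hk₀ := hk (mem_insert_self k _)
  have hk₁ := hk (mem_insert_of_mem (mem_singleton_self (k + 1)))
  simp only [mem_insert, mem_singleton] at hk₀ ⊢
  rcases hk₀ with rfl | rfl | rfl | rfl | rfl
  · exact Or.inl rfl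
  · refine Or.inr (Or.inl ?_)
    rw [show i + 1 + 1 = i + 2 by open Fin.CommRing in ring]
  · rw [show i + 2 + 1 = i + 3 by open Fin.CommRing in ring] at hk₁
    exact absurd hk₁ hi
  · exact Or.inr (Or.inr rfl)
  · rw [show j + 1 + 1 = j + 2 by open Fin.CommRing in ring] at hk₁
    exact absurd hk₁ hj

theorem card_filter_cyc_subset_le_three {e : Finset (Fin n)} (he : IsSection32 e) :
    ((cyc n).filter (· ⊆ e)).card ≤ 3 := by
  obtain ⟨i, j, rfl, -, -, hi, -, hj⟩ := he
  calc ((cyc n).filter (· ⊆ {i, i + 1, i + 2, j, j + 1})).card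
      ≤ ({{i, i + 1}, {i + 1, i + 2}, {j, j + 1}} : Finset (Finset (Fin n))).card := by
        refine card_le_card fun f hf => ?_
        obtain ⟨hf, hfe⟩ := mem_filter.mp hf
        obtain ⟨k, -, rfl⟩ := mem_image.mp hf
        exact pair_mem_of_subset_section32 hi hj hfe
    _ ≤ 3 := card_le_three

end

theorem stmt_18_general (n : ℕ) [NeZero n] (E : Finset (Finset (Fin n)))
    (e : Finset (Fin n)) (h32 : IsSection32 e) :
    ((cyc n).filter fun f =>
      ∃ e' ∈ E, e' ≠ e ∧ f = e ∩ e' ∧ 2 ≤ (e ∩ e').card).card ≤ 3 :=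
  calc _ ≤ ((cyc n).filter (· ⊆ e)).card :=
        card_le_card <| monotone_filter_right _ fun _ _ ⟨_, _, _, hf, _⟩ => hf ▸ inter_subset_left
    _ ≤ 3 := card_filter_cyc_subset_le_three h32

theorem stmt_18 (n : ℕ) [NeZero n] (hn : 3 ≤ n) (E : Finset (Finset (Fin n)))
    (hunif : ∀ e ∈ E, e.card = 5) (hEI : EIh E = cyc n)
    (e : Finset (Fin n)) (he : e ∈ E) (h32 : IsSection32 e) :
    ((cyc n).filter fun f =>
      ∃ e' ∈ E, e' ≠ e ∧ f = e ∩ e' ∧ 2 ≤ (e ∩ e').card).card ≤ 3 :=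
  stmt_18_general n E e h32
end
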